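/- arXiv:2204.09129 — 4 statements merged into one kernel-verified Lean document; each statement's English description precedes it below -/
import Mathlib

section
/- Let P ⊆ ℝ^n be a half-integral polytope of dimension d. Then for every c ∈ ℝ^n and every vertex u of P there exists a c-monotone path of length at most 3d from u to a vertex maximizing x ↦ cᵀx over P. In particular, the monotone diameter of P is at most 3d. -/
open Set Finset

/-- The standard dot product on `Fin n → ℝ`. -/
def dotp {n : ℕ} (c x : Fin n → ℝ) : ℝ := ∑ i, c i * x i

/-- A polytope is the convex hull of a finite nonempty set of points. -/
def IsPolytope {n : ℕ} (P : Set (Fin n → ℝ)) : Prop :=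
  ∃ S : Finset (Fin n → ℝ), S.Nonempty ∧ P = convexHull ℝ (S : Set (Fin n → ℝ))

/-- The dimension of a polytope: the dimension of its affine hull. -/
noncomputable def polytopeDim {n : ℕ} (P : Set (Fin n → ℝ)) : ℕ :=
  Module.finrank ℝ (affineSpan ℝ P).direction

/-- A vertex of a polytope is an extreme point. -/
def IsVertexOf {n : ℕ} (P : Set (Fin n → ℝ)) (v : Fin n → ℝ) : Prop :=
  v ∈ Set.extremePoints ℝ P

/-- An edge of a polytope: a segment between two distinct vertices that is an
exposed face of `P`; its endpoints are then called neighbors. -/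
def IsEdgeOf {n : ℕ} (P : Set (Fin n → ℝ)) (u v : Fin n → ℝ) : Prop :=
  u ≠ v ∧ IsVertexOf P u ∧ IsVertexOf P v ∧ IsExposed ℝ P (segment ℝ u v)

/-- A `c`-monotone path of length `m` in `P`: a sequence of `m+1` vertices of `P`
such that consecutive vertices form edges of `P` and the value of `cᵀx` strictly
increases along the path. -/
def IsMonotonePath {n : ℕ} (P : Set (Fin n → ℝ)) (c : Fin n → ℝ) (m : ℕ)
    (p : Fin (m + 1) → (Fin n → ℝ)) : Prop :=
  (∀ i, IsVertexOf P (p i)) ∧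
  ∀ i : Fin m, IsEdgeOf P (p i.castSucc) (p i.succ) ∧
    dotp c (p i.castSucc) < dotp c (p i.succ)

/-!
Induction on the dimension `d`. If a vertex `y` has a coordinate `y i ∈ {0, 1}` that is not
constant on `P`, then `y` lies in the face `{x ∈ P | x i = y i}` of smaller dimension, and by
induction a monotone path of length at most `3 (d - 1)` leads from `y` to a `c`-best vertex of that
face. Tilting the objective `± x i` of the face slightly towards `c` and then sweeping it further
towards `c`, each edge taken strictly lowers `± x i`; as `x i` only takes the values `0, 1/2, 1`,
at most two more edges reach the optimum. A vertex without such a coordinate first moves along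
one improving edge to a vertex that has one, for a total of `3 (d - 1) + 3 = 3 d`.

Improving edges exist at every non-optimal vertex `u`: sweeping `g + t • c` from a functional `g`
that exposes `u` and is generic, the last face containing `u` is an edge.
-/

open Filter Topology

section Reals

lemma tendsto_add_mul_nhdsGT (p q : ℝ) :
    Tendsto (fun s : ℝ => p + s * q) (𝓝[>] 0) (𝓝 p) :=
  tendsto_nhdsWithin_of_tendsto_nhds
    ((by fun_prop : Continuous fun s : ℝ => p + s * q).tendsto' 0 p (by simp))

lemma eventually_add_mul_lt_add_mul {p p' : ℝ} (h : p < p') (q q' : ℝ) :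
    ∀ᶠ s in 𝓝[>] (0 : ℝ), p + s * q < p' + s * q' :=
  ((tendsto_add_mul_nhdsGT (p' - p) (q' - q)).eventually_const_lt (sub_pos.2 h)).mono
    fun s hs => by linarith

lemma eventually_add_mul_le_add_mul_iff (p q p' q' : ℝ) :
    ∀ᶠ s in 𝓝[>] (0 : ℝ), (p + s * q ≤ p' + s * q' ↔ p < p' ∨ p = p' ∧ q ≤ q') := by
  rcases lt_trichotomy p p' with h | rfl | h
  · filter_upwards [eventually_add_mul_lt_add_mul h q q'] with s hs
    simp [h, hs.le]
  · filter_upwards [self_mem_nhdsWithin] with s (hs : 0 < s)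
    simp [hs]
  · filter_upwards [eventually_add_mul_lt_add_mul h q' q] with s hs
    simp [h.not_gt, h.ne', hs]

lemma eventually_add_mul_ne_zero {p q : ℝ} (h : p ≠ 0 ∨ q ≠ 0) :
    ∀ᶠ s in 𝓝[>] (0 : ℝ), p + s * q ≠ 0 := by
  by_cases hp : p = 0
  · filter_upwards [self_mem_nhdsWithin] with s (hs : 0 < s)
    simpa [hp, hs.ne'] using h
  · exact (tendsto_add_mul_nhdsGT p q).eventually_ne hp

end Reals

section Faces

variable {E : Type*} [NormedAddCommGroup E] [NormedSpace ℝ E]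

open scoped Classical in
noncomputable def maximizers (l : E →L[ℝ] ℝ) (A : Finset E) : Finset E :=
  {v ∈ A | ∀ w ∈ A, l w ≤ l v}

variable {l f c : E →L[ℝ] ℝ} {A : Finset E} {u v w y : E}

lemma add_smul_apply (f c : E →L[ℝ] ℝ) (t : ℝ) (x : E) : (f + t • c) x = f x + t * c x := rfl

lemma mem_maximizers : v ∈ maximizers l A ↔ v ∈ A ∧ ∀ w ∈ A, l w ≤ l v := by
  simp [maximizers]

lemma maximizers_subset : maximizers l A ⊆ A := fun _ hv => (mem_maximizers.1 hv).1

lemma apply_eq_of_mem_maximizers (hv : v ∈ maximizers l A) (hw : w ∈ maximizers l A) :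
    l v = l w :=
  le_antisymm ((mem_maximizers.1 hw).2 v (mem_maximizers.1 hv).1)
    ((mem_maximizers.1 hv).2 w (mem_maximizers.1 hw).1)

lemma apply_le_of_mem_convexHull {M : ℝ} (hM : ∀ w ∈ A, l w ≤ M) {x : E}
    (hx : x ∈ convexHull ℝ (A : Set E)) : l x ≤ M :=
  convexHull_min hM (convex_halfSpace_le l.isLinear M) hx

lemma exists_finset_extremePoints_convexHull_eq (S : Finset E) :
    ∃ A : Finset E, (convexHull ℝ (A : Set E)).extremePoints ℝ = A ∧
      convexHull ℝ (A : Set E) = convexHull ℝ (S : Set E) := by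
  have hfin := S.finite_toSet.subset (extremePoints_convexHull_subset (𝕜 := ℝ))
  have hhull : convexHull ℝ (hfin.toFinset : Set E) = convexHull ℝ (S : Set E) := by
    rw [hfin.coe_toFinset, ← (hfin.isClosed_convexHull ℝ).closure_eq]
    exact closure_convexHull_extremePoints (S.finite_toSet.isCompact_convexHull ℝ)
      (convex_convexHull ℝ _)
  exact ⟨hfin.toFinset, by rw [hhull, hfin.coe_toFinset], hhull⟩

lemma extremePoints_convexHull_eq_of_subset (hA : (convexHull ℝ (A : Set E)).extremePoints ℝ = A)
    {B : Finset E} (hBA : B ⊆ A) : (convexHull ℝ (B : Set E)).extremePoints ℝ = B := by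
  refine subset_antisymm extremePoints_convexHull_subset fun v hv => ?_
  refine inter_extremePoints_subset_extremePoints_of_subset
    (convexHull_mono (Finset.coe_subset.2 hBA)) ⟨subset_convexHull ℝ _ hv, ?_⟩
  rw [hA]
  exact Finset.coe_subset.2 hBA hv

lemma mem_maximizers_maximizers_iff :
    v ∈ maximizers c (maximizers f A) ↔
      v ∈ A ∧ ∀ w ∈ A, f w < f v ∨ f w = f v ∧ c w ≤ c v := by
  simp only [mem_maximizers]
  constructor
  · rintro ⟨⟨hvA, hfv⟩, hcv⟩
    refine ⟨hvA, fun w hw => (hfv w hw).lt_or_eq.imp_right fun hfw => ⟨hfw, hcv w ⟨hw, ?_⟩⟩⟩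
    exact fun w' hw' => hfw ▸ hfv w' hw'
  · rintro ⟨hvA, hv⟩
    have hfv : ∀ w ∈ A, f w ≤ f v := fun w hw => (hv w hw).elim le_of_lt fun h => h.1.le
    refine ⟨⟨hvA, hfv⟩, fun w ⟨hw, hfw⟩ => ?_⟩
    rcases hv w hw with h | h
    · exact absurd (hfw v hvA) h.not_ge
    · exact h.2

lemma eventually_maximizers_add_smul (f c : E →L[ℝ] ℝ) (A : Finset E) :
    ∀ᶠ s in 𝓝[>] (0 : ℝ), maximizers (f + s • c) A = maximizers c (maximizers f A) := by
  have h := (Filter.eventually_all_finset (A ×ˢ A)).2 fun p _ =>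
    eventually_add_mul_le_add_mul_iff (f p.2) (c p.2) (f p.1) (c p.1)
  filter_upwards [h] with s hs
  ext v
  rw [mem_maximizers_maximizers_iff, mem_maximizers]
  refine and_congr_right fun hv => forall₂_congr fun w hw => ?_
  simpa using hs (v, w) (mem_product.2 ⟨hv, hw⟩)

lemma ContinuousLinearMap.toExposed_convexHull (l : E →L[ℝ] ℝ) (A : Finset E) :
    l.toExposed (convexHull ℝ (A : Set E)) = convexHull ℝ (maximizers l A : Set E) := by
  have hface : IsExposed ℝ (convexHull ℝ (A : Set E)) (l.toExposed _) :=
    ContinuousLinearMap.toExposed.isExposed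
  have hcomp := hface.isCompact (A.finite_toSet.isCompact_convexHull ℝ)
  refine subset_antisymm ?_ (convexHull_min ?_ (hface.convex (convex_convexHull ℝ _)))
  · -- Krein–Milman: the face is the closed convex hull of its extreme points, which are vertices.
    rw [← closure_convexHull_extremePoints hcomp (hface.convex (convex_convexHull ℝ _)),
      ((maximizers l A).finite_toSet.isClosed_convexHull ℝ).closure_subset_iff]
    refine convexHull_mono fun x hx => ?_
    have hxA : x ∈ A := Finset.mem_coe.1 <| extremePoints_convexHull_subset <|
      hface.isExtreme.extremePoints_subset_extremePoints hx
    exact mem_maximizers.2 ⟨hxA, fun w hw =>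
      (extremePoints_subset hx).2 w (subset_convexHull ℝ _ hw)⟩
  · intro v hv
    obtain ⟨hvA, hv⟩ := mem_maximizers.1 hv
    exact ⟨subset_convexHull ℝ _ hvA, fun y hy => apply_le_of_mem_convexHull hv hy⟩

lemma isExposed_convexHull_maximizers (l : E →L[ℝ] ℝ) (A : Finset E) :
    IsExposed ℝ (convexHull ℝ (A : Set E)) (convexHull ℝ (maximizers l A : Set E)) :=
  l.toExposed_convexHull A ▸ ContinuousLinearMap.toExposed.isExposed

lemma IsExposed.of_convexHull_maximizers {B : Set E}
    (h : IsExposed ℝ (convexHull ℝ (maximizers f A : Set E)) B) :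
    IsExposed ℝ (convexHull ℝ (A : Set E)) B := by
  intro hB
  obtain ⟨l, rfl⟩ := h hB
  obtain ⟨s, hs⟩ := (eventually_maximizers_add_smul f l A).exists
  exact ⟨f + s • l, by
    rw [← ContinuousLinearMap.toExposed, l.toExposed_convexHull, ← hs,
      ← ContinuousLinearMap.toExposed, ContinuousLinearMap.toExposed_convexHull]⟩

/-- The largest `T ≥ s` for which `y` still maximizes `f + T • c` is the first parameter at which
a vertex better than `y` for `c` joins the maximizers. -/
lemma exists_mem_maximizers_of_lt {s : ℝ} (hy : y ∈ maximizers (f + s • c) A) (hv : v ∈ A)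
    (hyv : c y < c v) :
    ∃ T, s ≤ T ∧ y ∈ maximizers (f + T • c) A ∧ ∃ x ∈ maximizers (f + T • c) A, c y < c x := by
  classical
  obtain ⟨hyA, hy⟩ := mem_maximizers.1 hy
  simp only [add_smul_apply] at hy
  let ratio : E → ℝ := fun w => (f y - f w) / (c w - c y)
  obtain ⟨x, hx, hxmin⟩ := (A.filter (c y < c ·)).exists_min_image ratio ⟨v, by simpa [hv]⟩
  obtain ⟨hxA, hyx⟩ := Finset.mem_filter.1 hx
  have hT : ratio x * (c x - c y) = f y - f x := div_mul_cancel₀ _ (sub_pos.2 hyx).ne'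
  have hsT : s ≤ ratio x := by
    rw [le_div_iff₀ (sub_pos.2 hyx)]; linarith [hy x hxA]
  have hymax : ∀ w ∈ A, f w + ratio x * c w ≤ f y + ratio x * c y := by
    intro w hw
    rcases lt_or_ge (c y) (c w) with hyw | hwy
    · have := hxmin w (Finset.mem_filter.2 ⟨hw, hyw⟩)
      rw [le_div_iff₀ (sub_pos.2 hyw)] at this
      linarith
    · nlinarith [hy w hw]
  refine ⟨ratio x, hsT, mem_maximizers.2 ⟨hyA, ?_⟩, x, mem_maximizers.2 ⟨hxA, ?_⟩, hyx⟩ <;>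
    intro w hw <;> simp only [add_smul_apply]
  · exact hymax w hw
  · linarith [hymax w hw]

lemma exists_forall_lt_of_mem_extremePoints (hu : u ∈ (convexHull ℝ (A : Set E)).extremePoints ℝ) :
    ∃ g : E →L[ℝ] ℝ, ∀ w ∈ A, w ≠ u → g w < g u := by
  classical
  have hu' : u ∉ convexHull ℝ (A.erase u : Set E) := fun h => by
    have := inter_extremePoints_subset_extremePoints_of_subset
      (convexHull_mono (Finset.coe_subset.2 (A.erase_subset u))) ⟨h, hu⟩
    exact A.notMem_erase u (extremePoints_convexHull_subset this)
  obtain ⟨g, r, hg, hgu⟩ := geometric_hahn_banach_closed_point (convex_convexHull ℝ _)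
    ((A.erase u).finite_toSet.isClosed_convexHull ℝ) hu'
  exact ⟨g, fun w hw hwu =>
    (hg w (subset_convexHull ℝ _ (Finset.mem_erase.2 ⟨hwu, hw⟩))).trans hgu⟩

/-- Strict exposure of `u` is an open condition on `g`, so it survives moving `g` off the finitely
many hyperplanes `{g | g w = 0}`, `w ∈ W`. -/
lemma exists_forall_lt_and_apply_ne_zero {g : E →L[ℝ] ℝ} (hg : ∀ w ∈ A, w ≠ u → g w < g u)
    (W : Finset E) (hW : ∀ w ∈ W, w ≠ 0) :
    ∃ g' : E →L[ℝ] ℝ, (∀ w ∈ A, w ≠ u → g' w < g' u) ∧ ∀ w ∈ W, g' w ≠ 0 := by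
  classical
  induction W using Finset.induction_on with
  | empty => exact ⟨g, hg, by simp⟩
  | insert w₀ W _ ih =>
    obtain ⟨g₁, hg₁, hg₁W⟩ := ih fun w hw => hW w (Finset.mem_insert_of_mem hw)
    obtain ⟨φ, hφ⟩ := SeparatingDual.exists_ne_zero (R := ℝ) (hW w₀ (Finset.mem_insert_self _ _))
    have hlt := (Filter.eventually_all_finset (A.erase u)).2 fun w hw =>
      eventually_add_mul_lt_add_mul
        (hg₁ w (Finset.mem_of_mem_erase hw) (Finset.ne_of_mem_erase hw)) (φ w) (φ u)
    have hne := (Filter.eventually_all_finset (insert w₀ W)).2 fun w hw =>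
      eventually_add_mul_ne_zero (p := g₁ w) (q := φ w) <| by
        rcases Finset.mem_insert.1 hw with rfl | hw
        exacts [Or.inr hφ, Or.inl (hg₁W w hw)]
    obtain ⟨s, hs, hsW⟩ := (hlt.and hne).exists
    exact ⟨g₁ + s • φ, fun w hw hwu => hs w (Finset.mem_erase.2 ⟨hwu, hw⟩), hsW⟩

lemma not_collinear_of_mem_extremePoints {S : Set E} {x y z : E} (hx : x ∈ S.extremePoints ℝ)
    (hy : y ∈ S.extremePoints ℝ) (hz : z ∈ S.extremePoints ℝ) (hxy : x ≠ y) (hxz : x ≠ z)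
    (hyz : y ≠ z) : ¬ Collinear ℝ {x, y, z} := by
  have endpoint : ∀ {a b c : E}, a ∈ S → b ∈ S.extremePoints ℝ → c ∈ S → Wbtw ℝ a b c →
      a = b ∨ c = b := fun ha hb hc h =>
    (mem_extremePoints_iff_forall_segment.1 hb).2 _ ha _ hc h.mem_segment
  intro h
  rcases h.wbtw_or_wbtw_or_wbtw with h | h | h
  · rcases endpoint hx.1 hy hz.1 h with h | h <;> tauto
  · rcases endpoint hy.1 hz hx.1 h with h | h <;> tauto
  · rcases endpoint hz.1 hx hy.1 h with h | h <;> tauto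

lemma smul_sub_ne_smul_sub_of_mem_extremePoints {S : Set E} {x y z : E}
    (hx : x ∈ S.extremePoints ℝ) (hy : y ∈ S.extremePoints ℝ) (hz : z ∈ S.extremePoints ℝ)
    (hxy : x ≠ y) (hxz : x ≠ z) (hyz : y ≠ z) {α β : ℝ} (hα : α ≠ 0) :
    α • (x - y) ≠ β • (x - z) := by
  intro h
  refine not_collinear_of_mem_extremePoints hy hx hz hxy.symm hyz hxz
    (collinear_insert_of_mem_affineSpan_pair ?_)
  have hy : y = (β / α) • (z -ᵥ x) +ᵥ x := by
    rw [vsub_eq_sub, vadd_eq_add, div_eq_inv_mul, mul_smul, ← neg_sub x z, smul_neg, ← h,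
      smul_neg, inv_smul_smul₀ hα]
    abel
  exact hy ▸ smul_vsub_vadd_mem_affineSpan_pair _ _ _

theorem exists_isExposed_segment_of_lt (hA : (convexHull ℝ (A : Set E)).extremePoints ℝ = A)
    (hu : u ∈ A) (hv : v ∈ A) (huv : c u < c v) :
    ∃ x ∈ A, c u < c x ∧ IsExposed ℝ (convexHull ℝ (A : Set E)) (segment ℝ u x) := by
  classical
  have hext : ∀ {w}, w ∈ A → w ∈ (convexHull ℝ (A : Set E)).extremePoints ℝ := fun hw => by
    rw [hA]; exact hw
  obtain ⟨g, hg⟩ := exists_forall_lt_of_mem_extremePoints (hext hu)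
  -- A face of `g + t • c` containing `u`, `x` and a third vertex `z` forces `g` to vanish on
  -- the vector indexed by `(x, z)`.
  let W := ((A ×ˢ A).image fun p : E × E =>
    (c u - c p.2) • (u - p.1) - (c u - c p.1) • (u - p.2)).filter (· ≠ 0)
  obtain ⟨g, hgu, hgW⟩ := exists_forall_lt_and_apply_ne_zero hg W fun w hw =>
    (Finset.mem_filter.1 hw).2
  have hu0 : u ∈ maximizers (g + (0 : ℝ) • c) A := by
    refine mem_maximizers.2 ⟨hu, fun w hw => ?_⟩
    rcases eq_or_ne w u with rfl | hwu
    · exact le_rfl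
    · simpa using (hgu w hw hwu).le
  obtain ⟨T, -, huT, x, hxT, hux⟩ := exists_mem_maximizers_of_lt hu0 hv huv
  have hxA := maximizers_subset hxT
  have hface : maximizers (g + T • c) A = {u, x} := by
    refine subset_antisymm (fun z hz => ?_) (by simp [Finset.insert_subset_iff, huT, hxT])
    have hzA := maximizers_subset hz
    have e₁ := apply_eq_of_mem_maximizers huT hz
    have e₂ := apply_eq_of_mem_maximizers huT hxT
    simp only [add_smul_apply] at e₁ e₂
    by_contra hzux
    obtain ⟨hzu, hzx⟩ : z ≠ u ∧ z ≠ x := by simpa using hzux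
    rcases eq_or_ne (c u) (c z) with hcz | hcz
    · exact (hgu z hzA hzu).ne (by rw [hcz] at e₁; linarith)
    refine hgW _ (Finset.mem_filter.2 ⟨Finset.mem_image.2 ⟨(x, z), by simp [hxA, hzA], rfl⟩,
      sub_ne_zero.2 (smul_sub_ne_smul_sub_of_mem_extremePoints (hext hu) (hext hxA) (hext hzA)
        (ne_of_apply_ne c hux.ne) hzu.symm hzx.symm (sub_ne_zero.2 hcz))⟩) ?_
    simp only [map_sub, map_smul, smul_eq_mul]
    linear_combination (c u - c z) * e₂ - (c u - c x) * e₁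
  refine ⟨x, hxA, hux, ?_⟩
  rw [← convexHull_pair, ← Finset.coe_pair, ← hface]
  exact isExposed_convexHull_maximizers _ A

theorem exists_isExposed_segment_of_mem_maximizers
    (hA : (convexHull ℝ (A : Set E)).extremePoints ℝ = A) {s : ℝ} (hs : 0 < s)
    (hy : y ∈ maximizers (f + s • c) A) (hv : v ∈ A) (hyv : c y < c v) :
    ∃ x ∈ A, ∃ T : ℝ, 0 < T ∧ x ∈ maximizers (f + T • c) A ∧ c y < c x ∧ f x < f y ∧
      IsExposed ℝ (convexHull ℝ (A : Set E)) (segment ℝ y x) := by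
  obtain ⟨T, hsT, hyT, w, hwT, hyw⟩ := exists_mem_maximizers_of_lt hy hv hyv
  obtain ⟨x, hxT, hyx, hexp⟩ := exists_isExposed_segment_of_lt
    (extremePoints_convexHull_eq_of_subset hA maximizers_subset) hyT hwT hyw
  have hT : 0 < T := hs.trans_le hsT
  have hfc := apply_eq_of_mem_maximizers hyT hxT
  simp only [add_smul_apply] at hfc
  exact ⟨x, maximizers_subset hxT, T, hT, hxT, hyx, by nlinarith [mul_pos hT (sub_pos.2 hyx)],
    hexp.of_convexHull_maximizers⟩

lemma finrank_direction_affineSpan_lt [FiniteDimensional ℝ E] {s t : Set E} (hst : s ⊆ t)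
    (φ : E →L[ℝ] ℝ) {x : E} (hx : x ∈ s) (hs : ∀ y ∈ s, φ y = φ x) {z : E} (hz : z ∈ t)
    (hzx : φ z ≠ φ x) :
    Module.finrank ℝ (affineSpan ℝ s).direction < Module.finrank ℝ (affineSpan ℝ t).direction := by
  have hspan : affineSpan ℝ s ≤ AffineSubspace.mk' x (LinearMap.ker (φ : E →ₗ[ℝ] ℝ)) :=
    affineSpan_le.2 fun y hy => by simp [AffineSubspace.mem_mk', hs y hy]
  have hlt : affineSpan ℝ s < affineSpan ℝ t := by
    refine lt_of_le_of_ne (affineSpan_mono ℝ hst) fun heq => hzx ?_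
    have := hspan (heq ▸ subset_affineSpan ℝ t hz)
    simpa [AffineSubspace.mem_mk', sub_eq_zero] using this
  exact Submodule.finrank_lt_finrank_of_lt
    (AffineSubspace.direction_lt_of_nonempty hlt ⟨x, subset_affineSpan ℝ s hx⟩)

end Faces

section HalfIntegral

variable {n : ℕ}

noncomputable def dotpCLM (c : Fin n → ℝ) : (Fin n → ℝ) →L[ℝ] ℝ :=
  LinearMap.toContinuousLinearMap
    { toFun := dotp c
      map_add' := fun x y => by simp [dotp, mul_add, Finset.sum_add_distrib]
      map_smul' := fun t x => by simp [dotp, Finset.mul_sum, mul_left_comm] }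

def IsHalfIntegral (v : Fin n → ℝ) : Prop :=
  ∀ i, v i = 0 ∨ v i = 1 / 2 ∨ v i = 1

variable {A : Finset (Fin n → ℝ)} {c u x : Fin n → ℝ}

lemma isVertexOf_convexHull_iff (hA : (convexHull ℝ (A : Set (Fin n → ℝ))).extremePoints ℝ = A) :
    IsVertexOf (convexHull ℝ (A : Set (Fin n → ℝ))) u ↔ u ∈ A := by
  rw [IsVertexOf, hA, Finset.mem_coe]

lemma IsEdgeOf.of_maximizers {f : (Fin n → ℝ) →L[ℝ] ℝ}
    (h : IsEdgeOf (convexHull ℝ (maximizers f A : Set (Fin n → ℝ))) u x) :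
    IsEdgeOf (convexHull ℝ (A : Set (Fin n → ℝ))) u x := by
  have hvert := (isExposed_convexHull_maximizers f A).isExtreme.extremePoints_subset_extremePoints
  exact ⟨h.1, hvert h.2.1, hvert h.2.2.1, h.2.2.2.of_convexHull_maximizers⟩

lemma IsMonotonePath.of_maximizers {f : (Fin n → ℝ) →L[ℝ] ℝ} {m : ℕ}
    {p : Fin (m + 1) → Fin n → ℝ}
    (h : IsMonotonePath (convexHull ℝ (maximizers f A : Set (Fin n → ℝ))) c m p) :
    IsMonotonePath (convexHull ℝ (A : Set (Fin n → ℝ))) c m p :=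
  ⟨fun i => (isExposed_convexHull_maximizers f A).isExtreme.extremePoints_subset_extremePoints
    (h.1 i), fun i => ⟨(h.2 i).1.of_maximizers, (h.2 i).2⟩⟩

lemma isMonotonePath_zero {P : Set (Fin n → ℝ)} (hu : IsVertexOf P u) :
    IsMonotonePath P c 0 fun _ => u :=
  ⟨fun _ => hu, fun i => i.elim0⟩

lemma IsMonotonePath.cons {P : Set (Fin n → ℝ)} {m : ℕ} {p : Fin (m + 1) → Fin n → ℝ}
    (h : IsMonotonePath P c m p) (he : IsEdgeOf P u (p 0)) (hlt : dotp c u < dotp c (p 0)) :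
    IsMonotonePath P c (m + 1) (Fin.cons u p) := by
  refine ⟨Fin.cases he.2.1 h.1, Fin.cases ⟨he, hlt⟩ fun j => ?_⟩
  rw [← Fin.succ_castSucc]
  exact h.2 j

lemma IsMonotonePath.snoc {P : Set (Fin n → ℝ)} {m : ℕ} {p : Fin (m + 1) → Fin n → ℝ}
    (h : IsMonotonePath P c m p) (he : IsEdgeOf P (p (Fin.last m)) x)
    (hlt : dotp c (p (Fin.last m)) < dotp c x) :
    IsMonotonePath P c (m + 1) (Fin.snoc p x) := by
  refine ⟨Fin.lastCases (by simpa using he.2.2.1) fun j => by simpa using h.1 j,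
    Fin.lastCases ?_ fun j => ?_⟩
  · simpa [Fin.succ_last] using ⟨he, hlt⟩
  · rw [Fin.succ_castSucc]
    simpa only [Fin.snoc_castSucc] using h.2 j

def HasMonotonePathToMax (A : Finset (Fin n → ℝ)) (c u : Fin n → ℝ) (k : ℕ) : Prop :=
  ∃ (m : ℕ) (p : Fin (m + 1) → Fin n → ℝ), m ≤ k ∧
    IsMonotonePath (convexHull ℝ (A : Set (Fin n → ℝ))) c m p ∧ p 0 = u ∧
    ∀ v ∈ A, dotp c v ≤ dotp c (p (Fin.last m))

lemma HasMonotonePathToMax.mono {k k' : ℕ} (h : HasMonotonePathToMax A c u k) (hk : k ≤ k') :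
    HasMonotonePathToMax A c u k' :=
  let ⟨m, p, hm, hp⟩ := h
  ⟨m, p, hm.trans hk, hp⟩

lemma HasMonotonePathToMax.cons {k : ℕ} (h : HasMonotonePathToMax A c x k)
    (he : IsEdgeOf (convexHull ℝ (A : Set (Fin n → ℝ))) u x) (hlt : dotp c u < dotp c x) :
    HasMonotonePathToMax A c u (k + 1) := by
  obtain ⟨m, p, hm, hp, rfl, hmax⟩ := h
  exact ⟨m + 1, Fin.cons u p, by omega, hp.cons he hlt, rfl, by simpa using hmax⟩

open scoped Classical in
/-- Each step of the sweep strictly lowers `f`, so the number of values of `f` below the current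
vertex bounds the number of remaining steps. -/
lemma hasMonotonePathToMax_of_mem_maximizers
    (hA : (convexHull ℝ (A : Set (Fin n → ℝ))).extremePoints ℝ = A)
    (f : (Fin n → ℝ) →L[ℝ] ℝ) (N : ℕ) {m : ℕ} {p : Fin (m + 1) → Fin n → ℝ}
    (hp : IsMonotonePath (convexHull ℝ (A : Set (Fin n → ℝ))) c m p)
    (hs : ∃ s : ℝ, 0 < s ∧ p (Fin.last m) ∈ maximizers (f + s • dotpCLM c) A)
    (hN : #((A.image f).filter (· < f (p (Fin.last m)))) ≤ N) :
    HasMonotonePathToMax A c (p 0) (m + N) := by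
  induction N using Nat.strong_induction_on generalizing m with
  | _ N ih =>
  obtain ⟨s, hs, hy⟩ := hs
  by_cases hmax : ∀ v ∈ A, dotp c v ≤ dotp c (p (Fin.last m))
  · exact ⟨m, p, by omega, hp, rfl, hmax⟩
  push Not at hmax
  obtain ⟨v, hv, hyv⟩ := hmax
  obtain ⟨x, hxA, T, hT, hxT, hyx, hfx, hexp⟩ :=
    exists_isExposed_segment_of_mem_maximizers hA hs hy hv hyv
  have hedge : IsEdgeOf (convexHull ℝ (A : Set (Fin n → ℝ))) (p (Fin.last m)) x :=
    ⟨ne_of_apply_ne _ hyx.ne, (isVertexOf_convexHull_iff hA).2 (maximizers_subset hy),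
      (isVertexOf_convexHull_iff hA).2 hxA, hexp⟩
  have hsub : (A.image f).filter (· < f x) ⊆ (A.image f).filter (· < f (p (Fin.last m))) :=
    fun t ht => by
      simp only [Finset.mem_filter] at ht ⊢
      exact ⟨ht.1, ht.2.trans hfx⟩
  have hcard : #((A.image f).filter (· < f x)) < #((A.image f).filter (· < f (p (Fin.last m)))) :=
    Finset.card_lt_card <| (Finset.ssubset_iff_of_subset hsub).2
      ⟨f x, Finset.mem_filter.2 ⟨Finset.mem_image_of_mem f hxA, hfx⟩, by simp⟩
  have := ih _ (hcard.trans_le hN) (hp.snoc hedge hyx) ⟨T, hT, by simpa using hxT⟩ (by simp)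
  simpa using this.mono (by omega)

lemma card_image_mul_coord_le_three (hhalf : ∀ v ∈ A, IsHalfIntegral v) (σ : ℝ) (i : Fin n) :
    #(A.image fun v => σ * v i) ≤ 3 := by
  classical
  have hsub : A.image (fun v => v i) ⊆ {0, 1 / 2, 1} := fun t ht => by
    obtain ⟨v, hv, rfl⟩ := Finset.mem_image.1 ht
    simpa using hhalf v hv i
  calc #(A.image fun v => σ * v i)
      = #((A.image fun v => v i).image (σ * ·)) := by rw [Finset.image_image]; rfl
    _ ≤ #(A.image fun v => v i) := Finset.card_image_le
    _ ≤ 3 := (Finset.card_le_card hsub).trans Finset.card_le_three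

variable (n) in
def MonotoneDiameterBound (d : ℕ) : Prop :=
  ∀ A : Finset (Fin n → ℝ), (convexHull ℝ (A : Set (Fin n → ℝ))).extremePoints ℝ = A →
    (∀ v ∈ A, IsHalfIntegral v) → polytopeDim (convexHull ℝ (A : Set (Fin n → ℝ))) ≤ d →
    ∀ c u, u ∈ A → HasMonotonePathToMax A c u (3 * d)

lemma hasMonotonePathToMax_of_coord {d : ℕ} (ih : MonotoneDiameterBound n d)
    (hA : (convexHull ℝ (A : Set (Fin n → ℝ))).extremePoints ℝ = A)
    (hhalf : ∀ v ∈ A, IsHalfIntegral v)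
    (hdim : polytopeDim (convexHull ℝ (A : Set (Fin n → ℝ))) ≤ d + 1)
    {y : Fin n → ℝ} (hy : y ∈ A) {i : Fin n} (hyi : y i = 0 ∨ y i = 1) {w : Fin n → ℝ}
    (hw : w ∈ A) (hwi : w i ≠ y i) :
    HasMonotonePathToMax A c y (3 * d + 2) := by
  classical
  obtain ⟨σ, hσ, hσy⟩ : ∃ σ : ℝ, σ ≠ 0 ∧ ∀ v ∈ A, σ * v i ≤ σ * y i := by
    rcases hyi with h | h
    · refine ⟨-1, by norm_num, fun v hv => ?_⟩
      rcases hhalf v hv i with h' | h' | h' <;> norm_num [h, h']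
    · refine ⟨1, one_ne_zero, fun v hv => ?_⟩
      rcases hhalf v hv i with h' | h' | h' <;> norm_num [h, h']
  let f : (Fin n → ℝ) →L[ℝ] ℝ := σ • ContinuousLinearMap.proj i
  have hf : ∀ v, f v = σ * v i := fun v => rfl
  have hyF : y ∈ maximizers f A := mem_maximizers.2 ⟨hy, fun v hv => by simpa [hf] using hσy v hv⟩
  have hF := extremePoints_convexHull_eq_of_subset hA (maximizers_subset (l := f))
  have hdimF : polytopeDim (convexHull ℝ (maximizers f A : Set (Fin n → ℝ))) ≤ d := by
    have := finrank_direction_affineSpan_lt (Finset.coe_subset.2 maximizers_subset) f hyF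
      (fun v hv => apply_eq_of_mem_maximizers hv hyF) hw (by simpa [hf, hσ] using hwi)
    rw [polytopeDim, affineSpan_convexHull] at hdim ⊢
    omega
  obtain ⟨m, p, hm, hp, rfl, hpmax⟩ :=
    ih _ hF (fun v hv => hhalf v (maximizers_subset hv)) hdimF c y hyF
  have hlast : p (Fin.last m) ∈ maximizers f A := (isVertexOf_convexHull_iff hF).1 (hp.1 _)
  -- For small `s > 0`, the maximizers of `f + s • c` are the `c`-best vertices of the face.
  obtain ⟨s, hsF, hs⟩ :=
    ((eventually_maximizers_add_smul f (dotpCLM c) A).and self_mem_nhdsWithin).exists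
  have hcount : #((A.image f).filter (· < f (p (Fin.last m)))) ≤ 2 := by
    have hlt : #((A.image f).filter (· < f (p (Fin.last m)))) < #(A.image f) :=
      Finset.card_lt_card <| Finset.filter_ssubset.2
        ⟨_, Finset.mem_image_of_mem f (maximizers_subset hlast), lt_irrefl _⟩
    have h3 : #(A.image f) ≤ 3 := card_image_mul_coord_le_three hhalf σ i
    omega
  exact (hasMonotonePathToMax_of_mem_maximizers hA f 2 hp.of_maximizers
    ⟨s, hs, hsF ▸ mem_maximizers.2 ⟨hlast, hpmax⟩⟩ hcount).mono (by omega)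

theorem monotoneDiameterBound (d : ℕ) : MonotoneDiameterBound n d := by
  induction d using Nat.strong_induction_on with
  | _ d ih =>
  intro A hA hhalf hdim c u hu
  have hvert := fun {v} => isVertexOf_convexHull_iff (u := v) hA
  by_cases hmax : ∀ v ∈ A, dotp c v ≤ dotp c u
  · exact ⟨0, fun _ => u, Nat.zero_le _, isMonotonePath_zero (hvert.2 hu), rfl, hmax⟩
  push Not at hmax
  obtain ⟨v, hv, huv⟩ := hmax
  obtain ⟨d, rfl⟩ : ∃ d', d = d' + 1 := by
    have := finrank_direction_affineSpan_lt (Set.singleton_subset_iff.2 (Finset.mem_coe.2 hu))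
      (dotpCLM c) rfl (fun y hy => by rw [hy]) (Finset.mem_coe.2 hv) huv.ne'
    rw [polytopeDim, affineSpan_convexHull] at hdim
    exact ⟨d - 1, by omega⟩
  have ih := ih d (by omega)
  by_cases htight : ∃ i, (u i = 0 ∨ u i = 1) ∧ ∃ w ∈ A, w i ≠ u i
  · obtain ⟨i, hui, w, hw, hwi⟩ := htight
    exact (hasMonotonePathToMax_of_coord ih hA hhalf hdim hu hui hw hwi).mono (by omega)
  -- Otherwise every coordinate in which `u` moves is `1/2`, so one improving edge reaches a
  -- vertex with a `0/1` coordinate that varies over `A`.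
  push Not at htight
  obtain ⟨x, hx, hux, hexp⟩ := exists_isExposed_segment_of_lt (c := dotpCLM c) hA hu hv huv
  obtain ⟨i, hi⟩ := Function.ne_iff.1 (ne_of_apply_ne (dotp c) hux.ne')
  have hui : u i = 1 / 2 := by
    rcases hhalf u hu i with h | h | h
    exacts [absurd (htight i (.inl h) x hx) hi, h, absurd (htight i (.inr h) x hx) hi]
  have hxi : x i = 0 ∨ x i = 1 := by
    rcases hhalf x hx i with h | h | h
    exacts [.inl h, absurd (h.trans hui.symm) hi, .inr h]
  exact ((hasMonotonePathToMax_of_coord ih hA hhalf hdim hx hxi hu hi.symm).cons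
    ⟨hux.ne ∘ congrArg (dotp c), hvert.2 hu, hvert.2 hx, hexp⟩ hux).mono (by omega)

end HalfIntegral

/-- **Theorem 1 (half-integral monotone diameter bound).**
Let `P ⊆ ℝ^n` be a half-integral polytope of dimension `d`. Then for every
`c ∈ ℝ^n` and every vertex `u` of `P` there is a `c`-monotone path of length at
most `3d` from `u` to a vertex maximizing `cᵀx` over `P`. -/
theorem half_integral_monotone_diameter {n : ℕ} (P : Set (Fin n → ℝ))
    (hP : IsPolytope P)
    (hhalf : ∀ v, IsVertexOf P v → ∀ i, v i = 0 ∨ v i = 1 / 2 ∨ v i = 1)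
    (c : Fin n → ℝ) (u : Fin n → ℝ) (hu : IsVertexOf P u) :
    ∃ (m : ℕ) (p : Fin (m + 1) → (Fin n → ℝ)),
      m ≤ 3 * polytopeDim P ∧
      IsMonotonePath P c m p ∧
      p 0 = u ∧
      (∀ x ∈ P, dotp c x ≤ dotp c (p (Fin.last m))) := by
  obtain ⟨S, -, rfl⟩ := hP
  obtain ⟨A, hA, hAS⟩ := exists_finset_extremePoints_convexHull_eq S
  rw [← hAS] at hhalf hu ⊢
  have hvert := fun {v} => isVertexOf_convexHull_iff (u := v) hA
  obtain ⟨m, p, hm, hp, hp0, hmax⟩ :=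
    monotoneDiameterBound _ A hA (fun v hv => hhalf v (hvert.2 hv)) le_rfl c u (hvert.1 hu)
  exact ⟨m, p, hm, hp, hp0, fun x hx => apply_le_of_mem_convexHull (l := dotpCLM c) hmax hx⟩
end

section
/- Let A be an integer r×n matrix and b ∈ ℤ^r, and suppose P = {x ∈ ℝ^n : Ax ≤ b} ⊆ [0,k]^n is a bounded polytope of dimension d ≥ 1 all of whose vertices lie in ℤ^n (a (0,k)-lattice polytope). Then for every c ∈ ℝ^n and every vertex u of P there exists a c-monotone path of length at most d·n·k·‖A‖∞ from u to a vertex maximizing x ↦ cᵀx over P. -/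
/-
Let `g` be the sum of at most `d` rows of `A` that are tight at `u` and already determine `u`
among the points of `P`. Then `u` is the unique maximiser of `g` on `P`, `g` takes integer values
at the (integral) vertices, and `g u - g v ≤ d n k ‖A‖∞` for every vertex `v`. Run the shadow
vertex rule on the objectives `c + μ g`, starting from a `μ` so large that `u` is optimal and
lowering `μ`: each pivot follows an edge, increases `c` and strictly decreases `g`, hence
decreases it by at least one, so there are at most `d n k ‖A‖∞` pivots. The edges are exposed
faces of `P` cut out by linear functionals, and a face of such a face is again one.
-/

open Set Finset

/-- `‖A‖∞`: the maximum absolute value of an entry of an integer matrix `A`. -/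
def matNormInf {r n : ℕ} (A : Matrix (Fin r) (Fin n) ℤ) : ℕ :=
  Finset.univ.sup fun p : Fin r × Fin n => (A p.1 p.2).natAbs

namespace LatticePolytope

open Filter Topology Module

section MaxFace

variable {ι : Type*} [Fintype ι]

noncomputable def dotProductCLM (w : ι → ℝ) : StrongDual ℝ (ι → ℝ) :=
  LinearMap.toContinuousLinearMap (dotProductBilin ℝ ℝ w)

lemma dotProduct_le_of_mem_convexHull {s : Set (ι → ℝ)} {w x : ι → ℝ} {M : ℝ}
    (h : ∀ y ∈ s, w ⬝ᵥ y ≤ M) (hx : x ∈ convexHull ℝ s) : w ⬝ᵥ x ≤ M :=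
  convexHull_min h (convex_halfSpace_le (dotProductBilin ℝ ℝ w).isLinear M) hx

open Classical in
noncomputable def maxFace (S : Finset (ι → ℝ)) (w : ι → ℝ) : Finset (ι → ℝ) :=
  {s ∈ S | ∀ t ∈ S, w ⬝ᵥ t ≤ w ⬝ᵥ s}

variable {S : Finset (ι → ℝ)} {w s : ι → ℝ}

lemma mem_maxFace : s ∈ maxFace S w ↔ s ∈ S ∧ ∀ t ∈ S, w ⬝ᵥ t ≤ w ⬝ᵥ s := by
  classical
  simp [maxFace]

lemma maxFace_subset : maxFace S w ⊆ S := fun _ hs => (mem_maxFace.1 hs).1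

lemma dotProduct_eq_of_mem_maxFace {s t : ι → ℝ} (hs : s ∈ maxFace S w)
    (ht : t ∈ maxFace S w) : w ⬝ᵥ s = w ⬝ᵥ t :=
  le_antisymm ((mem_maxFace.1 ht).2 s (mem_maxFace.1 hs).1)
    ((mem_maxFace.1 hs).2 t (mem_maxFace.1 ht).1)

lemma toExposed_convexHull (S : Finset (ι → ℝ)) (w : ι → ℝ) :
    (dotProductCLM w).toExposed (convexHull ℝ (S : Set (ι → ℝ))) =
      convexHull ℝ (maxFace S w : Set (ι → ℝ)) := by
  set F := (dotProductCLM w).toExposed (convexHull ℝ (S : Set (ι → ℝ)))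
  have hF : IsExposed ℝ (convexHull ℝ (S : Set (ι → ℝ))) F :=
    ContinuousLinearMap.toExposed.isExposed
  refine Subset.antisymm ?_ (convexHull_min (fun s hs => ?_) (hF.convex (convex_convexHull ℝ _)))
  · have hext : F.extremePoints ℝ ⊆ maxFace S w := fun y hy => by
      have hyS : y ∈ S := extremePoints_convexHull_subset
        (hF.isExtreme.extremePoints_subset_extremePoints hy)
      exact mem_maxFace.2 ⟨hyS, fun t ht => (extremePoints_subset hy).2 t
        (subset_convexHull ℝ _ ht)⟩
    calc F = closure (convexHull ℝ (F.extremePoints ℝ)) :=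
          (closure_convexHull_extremePoints
            (hF.isCompact (S.finite_toSet.isCompact_convexHull ℝ)) (hF.convex
              (convex_convexHull ℝ _))).symm
      _ ⊆ closure (convexHull ℝ (maxFace S w : Set (ι → ℝ))) :=
          closure_mono (convexHull_mono hext)
      _ = convexHull ℝ (maxFace S w : Set (ι → ℝ)) :=
          ((maxFace S w).finite_toSet.isCompact_convexHull ℝ).isClosed.closure_eq
  · obtain ⟨hsS, hsmax⟩ := mem_maxFace.1 hs
    exact ⟨subset_convexHull ℝ _ hsS, fun y hy => dotProduct_le_of_mem_convexHull hsmax hy⟩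

lemma isExposed_convexHull_maxFace (S : Finset (ι → ℝ)) (w : ι → ℝ) :
    IsExposed ℝ (convexHull ℝ (S : Set (ι → ℝ))) (convexHull ℝ (maxFace S w : Set (ι → ℝ))) :=
  toExposed_convexHull S w ▸ ContinuousLinearMap.toExposed.isExposed

lemma eventually_add_mul_nonpos_iff (a b : ℝ) :
    ∀ᶠ ε in 𝓝[>] 0, (a + ε * b ≤ 0 ↔ a < 0 ∨ a = 0 ∧ b ≤ 0) := by
  have hlim : Tendsto (fun ε => a + ε * b) (𝓝[>] 0) (𝓝 a) :=
    tendsto_nhdsWithin_of_tendsto_nhds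
      ((by fun_prop : Continuous fun ε : ℝ => a + ε * b).tendsto' 0 a (by simp))
  rcases lt_trichotomy a 0 with ha | rfl | ha
  · filter_upwards [hlim.eventually (gt_mem_nhds ha)] with ε hε
    simp [ha, hε.le]
  · filter_upwards [self_mem_nhdsWithin] with ε (hε : 0 < ε)
    simp [mul_nonpos_iff, hε.le, hε.not_ge]
  · filter_upwards [hlim.eventually (lt_mem_nhds ha)] with ε hε
    simp [ha.not_gt, ha.ne', hε.not_ge]

lemma exists_maxFace_add_smul_eq (S : Finset (ι → ℝ)) (w₁ w₂ : ι → ℝ) :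
    ∃ ε : ℝ, 0 < ε ∧ maxFace S (w₁ + ε • w₂) = maxFace (maxFace S w₁) w₂ := by
  have hlex : ∀ᶠ ε : ℝ in 𝓝[>] 0, ∀ p ∈ S ×ˢ S,
      ((w₁ + ε • w₂) ⬝ᵥ p.2 ≤ (w₁ + ε • w₂) ⬝ᵥ p.1 ↔
        w₁ ⬝ᵥ p.2 < w₁ ⬝ᵥ p.1 ∨ w₁ ⬝ᵥ p.2 = w₁ ⬝ᵥ p.1 ∧ w₂ ⬝ᵥ p.2 ≤ w₂ ⬝ᵥ p.1) := by
    rw [eventually_all_finset]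
    intro p _
    filter_upwards [eventually_add_mul_nonpos_iff (w₁ ⬝ᵥ p.2 - w₁ ⬝ᵥ p.1)
      (w₂ ⬝ᵥ p.2 - w₂ ⬝ᵥ p.1)] with ε h
    simp only [add_dotProduct, smul_dotProduct, smul_eq_mul, sub_neg, sub_eq_zero,
      sub_nonpos] at h ⊢
    rw [← h]
    constructor <;> intro <;> linarith
  obtain ⟨ε, hε, hpos⟩ := (hlex.and self_mem_nhdsWithin).exists
  refine ⟨ε, hpos, Finset.ext fun s => ?_⟩
  simp only [mem_maxFace]
  constructor
  · rintro ⟨hs, hmax⟩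
    have hst := fun t ht => (hε (s, t) (mk_mem_product hs ht)).1 (hmax t ht)
    have h₁ : ∀ t ∈ S, w₁ ⬝ᵥ t ≤ w₁ ⬝ᵥ s := fun t ht => (hst t ht).elim le_of_lt (·.1.le)
    exact ⟨⟨hs, h₁⟩, fun t ⟨ht, htmax⟩ => ((hst t ht).resolve_left (htmax s hs).not_gt).2⟩
  · rintro ⟨⟨hs, h₁⟩, h₂⟩
    refine ⟨hs, fun t ht => (hε (s, t) (mk_mem_product hs ht)).2 ?_⟩
    rcases (h₁ t ht).lt_or_eq with h | h
    · exact Or.inl h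
    · exact Or.inr ⟨h, h₂ t ⟨ht, fun t' ht' => (h₁ t' ht').trans h.ge⟩⟩

lemma dotProduct_self_pos {v : ι → ℝ} (hv : v ≠ 0) : 0 < v ⬝ᵥ v := by
  simpa using Matrix.dotProduct_star_self_pos_iff.2 hv

lemma mem_extremePoints_convexHull_iff {u : ι → ℝ} :
    u ∈ (convexHull ℝ (S : Set (ι → ℝ))).extremePoints ℝ ↔
      u ∈ S ∧ ∃ g : ι → ℝ, ∀ s ∈ S, s ≠ u → g ⬝ᵥ s < g ⬝ᵥ u := by
  classical
  constructor
  · intro hu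
    have huS : u ∈ S := extremePoints_convexHull_subset hu
    have hsep : u ∉ convexHull ℝ (S.erase u : Set (ι → ℝ)) := fun h => by
      simpa using extremePoints_convexHull_subset
        (inter_extremePoints_subset_extremePoints_of_subset
          (convexHull_mono (coe_subset.2 (erase_subset u S))) ⟨h, hu⟩)
    obtain ⟨f, a, hf, hfu⟩ := geometric_hahn_banach_closed_point (convex_convexHull ℝ _)
      ((S.erase u).finite_toSet.isCompact_convexHull ℝ).isClosed hsep
    have hdot : ∀ x, f x = (dotProductEquiv ℝ ι).symm f.toLinearMap ⬝ᵥ x := fun x =>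
      (LinearMap.congr_fun ((dotProductEquiv ℝ ι).apply_symm_apply f.toLinearMap) x).symm
    refine ⟨huS, (dotProductEquiv ℝ ι).symm f.toLinearMap, fun s hs hsu => ?_⟩
    rw [← hdot, ← hdot]
    exact (hf s (subset_convexHull ℝ _ (mem_erase.2 ⟨hsu, hs⟩))).trans hfu
  · rintro ⟨huS, g, hg⟩
    have hface : maxFace S g = {u} := by
      ext s
      rw [mem_maxFace, Finset.mem_singleton]
      constructor
      · rintro ⟨hs, hmax⟩
        by_contra h
        exact (hmax u huS).not_gt (hg s hs h)
      · rintro rfl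
        refine ⟨huS, fun t ht => ?_⟩
        rcases eq_or_ne t s with rfl | h
        exacts [le_rfl, (hg t ht h).le]
    have := (isExposed_convexHull_maxFace S g).isExtreme
    rw [hface, coe_singleton, convexHull_singleton] at this
    exact isExtreme_singleton.1 this

lemma left_mem_extremePoints_segment {u v : ι → ℝ} (h : u ≠ v) :
    u ∈ (segment ℝ u v).extremePoints ℝ := by
  classical
  rw [← convexHull_pair, ← coe_pair]
  refine mem_extremePoints_convexHull_iff.2 ⟨mem_insert_self _ _, u - v, fun s hs hsu => ?_⟩
  obtain rfl : s = v := by simpa [hsu] using hs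
  have := dotProduct_self_pos (sub_ne_zero.2 h)
  simp only [dotProduct_sub] at this
  linarith

lemma dotProduct_lt_dotProduct_self {q e : ι → ℝ} (hq : q ⬝ᵥ q ≤ e ⬝ᵥ e) (hne : q ≠ e) :
    e ⬝ᵥ q < e ⬝ᵥ e := by
  have := dotProduct_self_pos (sub_ne_zero.2 hne)
  simp only [dotProduct_sub, sub_dotProduct, dotProduct_comm q e] at this
  linarith

lemma convexHull_eq_segment_of_forall_eq_add_smul {E : Type*} [AddCommGroup E] [Module ℝ E]
    {T : Set E} {u v e : E} {σ : E → ℝ} (hu : u ∈ T) (hv : v ∈ T)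
    (hT : ∀ t ∈ T, t = u + σ t • e ∧ 0 ≤ σ t ∧ σ t ≤ σ v) :
    convexHull ℝ T = segment ℝ u v := by
  refine Subset.antisymm (convexHull_min (fun t ht => ?_) (convex_segment u v))
    (segment_subset_convexHull hu hv)
  obtain ⟨ht, hσt, htv⟩ := hT t ht
  rw [segment_eq_image']
  rcases (hσt.trans htv).eq_or_lt with h | h
  · refine ⟨0, left_mem_Icc.2 zero_le_one, ?_⟩
    rw [ht, le_antisymm (h ▸ htv) hσt]
    simp
  · refine ⟨σ t / σ v, ⟨div_nonneg hσt h.le, div_le_one_of_le₀ htv h.le⟩, ?_⟩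
    have hve : v - u = σ v • e := sub_eq_iff_eq_add'.2 (hT v hv).1
    show u + (σ t / σ v) • (v - u) = t
    rw [hve, smul_smul, div_mul_cancel₀ _ h.ne', ← ht]

lemma exists_convexHull_maxFace_eq_segment {T : Finset (ι → ℝ)} {u g : ι → ℝ} (hu : u ∈ T)
    (hg : ∀ t ∈ T, t ≠ u → g ⬝ᵥ t < g ⬝ᵥ u) (hT : (T.erase u).Nonempty) :
    ∃ v ∈ T, v ≠ u ∧ ∃ w, convexHull ℝ (maxFace T w : Set (ι → ℝ)) = segment ℝ u v := by
  set σ : (ι → ℝ) → ℝ := fun t => g ⬝ᵥ u - g ⬝ᵥ t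
  have hσ : ∀ t ∈ T, t ≠ u → 0 < σ t := fun t ht htu => sub_pos.2 (hg t ht htu)
  set q : (ι → ℝ) → ι → ℝ := fun t => (σ t)⁻¹ • (t - u)
  have hq : ∀ t ∈ T, t ≠ u → t - u = σ t • q t := fun t ht htu => by
    simp only [q, smul_smul, mul_inv_cancel₀ (hσ t ht htu).ne', one_smul]
  -- The vectors `q t` end on the hyperplane `g ⬝ᵥ x = -1`; the longest one points along an edge.
  obtain ⟨s, hs, hsmax⟩ := (T.erase u).exists_max_image (fun t => q t ⬝ᵥ q t) hT
  obtain ⟨hsu, hsT⟩ := mem_erase.1 hs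
  set e := q s
  set w := e + (e ⬝ᵥ e) • g
  have hw : ∀ t ∈ T, t ≠ u → w ⬝ᵥ t - w ⬝ᵥ u = σ t * (e ⬝ᵥ q t - e ⬝ᵥ e) := fun t ht htu => by
    have h := congrArg (e ⬝ᵥ ·) (hq t ht htu)
    simp only [dotProduct_sub, dotProduct_smul, smul_eq_mul] at h
    simp only [w, σ, add_dotProduct, smul_dotProduct, smul_eq_mul]
    linear_combination h
  have hle : ∀ t ∈ T, t ≠ u → e ⬝ᵥ q t ≤ e ⬝ᵥ e := fun t ht htu => by
    rcases eq_or_ne (q t) e with h | h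
    exacts [h ▸ le_rfl, (dotProduct_lt_dotProduct_self (hsmax t (mem_erase.2 ⟨htu, ht⟩)) h).le]
  have huF : u ∈ maxFace T w := mem_maxFace.2 ⟨hu, fun t ht => by
    rcases eq_or_ne t u with rfl | htu
    · exact le_rfl
    · nlinarith [hw t ht htu, hσ t ht htu, hle t ht htu]⟩
  have hray : ∀ t ∈ maxFace T w, t = u + σ t • e := fun t ht => by
    obtain ⟨htT, -⟩ := mem_maxFace.1 ht
    rcases eq_or_ne t u with rfl | htu
    · simp [σ]
    · have hqt : q t = e := by
        by_contra h
        have := hw t htT htu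
        nlinarith [dotProduct_eq_of_mem_maxFace ht huF, hσ t htT htu,
          dotProduct_lt_dotProduct_self (hsmax t (mem_erase.2 ⟨htu, htT⟩)) h]
      rw [← hqt, ← hq t htT htu, add_sub_cancel]
  have hsF : s ∈ maxFace T w := mem_maxFace.2 ⟨hsT, fun t ht => by
    rcases eq_or_ne t u with rfl | htu
    · nlinarith [hw s hsT hsu, hσ s hsT hsu]
    · nlinarith [hw s hsT hsu, hw t ht htu, hσ t ht htu, hle t ht htu]⟩
  obtain ⟨v, hv, hvmax⟩ := (maxFace T w).exists_max_image σ ⟨s, hsF⟩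
  have hvu : v ≠ u := by
    rintro rfl
    exact (hσ s hsT hsu).not_ge (by simpa [σ] using hvmax s hsF)
  refine ⟨v, maxFace_subset hv, hvu, w, convexHull_eq_segment_of_forall_eq_add_smul huF hv
    fun t ht => ⟨hray t ht, ?_, hvmax t ht⟩⟩
  rcases eq_or_ne t u with rfl | htu
  · simp [σ]
  · exact (hσ t (maxFace_subset ht) htu).le

lemma exists_mem_maxFace_add_smul {u g : ι → ℝ} (hu : u ∈ S)
    (hg : ∀ s ∈ S, s ≠ u → g ⬝ᵥ s < g ⬝ᵥ u) (c : ι → ℝ) :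
    ∃ μ : ℝ, 0 ≤ μ ∧ u ∈ maxFace S (c + μ • g) := by
  have : ∀ᶠ μ : ℝ in atTop, 0 ≤ μ ∧ ∀ s ∈ S, (c + μ • g) ⬝ᵥ s ≤ (c + μ • g) ⬝ᵥ u := by
    refine (eventually_ge_atTop 0).and ((eventually_all_finset S).2 fun s hs => ?_)
    rcases eq_or_ne s u with rfl | hsu
    · exact Eventually.of_forall fun _ => le_rfl
    · filter_upwards [(tendsto_id.atTop_mul_const (sub_pos.2 (hg s hs hsu))).eventually_ge_atTop
        (c ⬝ᵥ s - c ⬝ᵥ u)] with μ hμ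
      simp only [add_dotProduct, smul_dotProduct, smul_eq_mul, id] at hμ ⊢
      linarith
  obtain ⟨μ, hμ, hmax⟩ := this.exists
  exact ⟨μ, hμ, mem_maxFace.2 ⟨hu, hmax⟩⟩

/-- `ν` is the value, as `μ` decreases, at which a `c`-better point first ties with `x`. -/
lemma exists_pos_mem_maxFace_add_smul {x c g : ι → ℝ} {μ : ℝ} (hμ : 0 ≤ μ)
    (hx : x ∈ maxFace S (c + μ • g)) (hc : ∃ s ∈ S, c ⬝ᵥ x < c ⬝ᵥ s) :
    ∃ ν : ℝ, 0 < ν ∧ x ∈ maxFace S (c + ν • g) ∧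
      ∃ s ∈ maxFace S (c + ν • g), c ⬝ᵥ x < c ⬝ᵥ s := by
  classical
  obtain ⟨hxS, hxmax⟩ := mem_maxFace.1 hx
  simp only [add_dotProduct, smul_dotProduct, smul_eq_mul] at hxmax
  set ρ : (ι → ℝ) → ℝ := fun s => (c ⬝ᵥ s - c ⬝ᵥ x) / (g ⬝ᵥ x - g ⬝ᵥ s)
  have hB : ∀ s ∈ S, c ⬝ᵥ x < c ⬝ᵥ s → g ⬝ᵥ s < g ⬝ᵥ x ∧ 0 < ρ s ∧ ρ s ≤ μ := fun s hs hcs => by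
    have hgs : g ⬝ᵥ s < g ⬝ᵥ x := by nlinarith [hxmax s hs]
    refine ⟨hgs, div_pos (by linarith) (by linarith), (div_le_iff₀ (by linarith)).2 ?_⟩
    linarith [hxmax s hs]
  obtain ⟨s₀, hs₀, hs₀max⟩ := ({s ∈ S | c ⬝ᵥ x < c ⬝ᵥ s}).exists_max_image ρ
    (by simpa [Finset.Nonempty] using hc)
  obtain ⟨hs₀S, hcs₀⟩ := Finset.mem_filter.1 hs₀
  obtain ⟨hgs₀, hν, hνμ⟩ := hB s₀ hs₀S hcs₀
  have hface : ∀ t ∈ S, c ⬝ᵥ t + ρ s₀ * g ⬝ᵥ t ≤ c ⬝ᵥ x + ρ s₀ * g ⬝ᵥ x := fun t ht => by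
    by_cases hct : c ⬝ᵥ x < c ⬝ᵥ t
    · have hρt := hs₀max t (Finset.mem_filter.2 ⟨ht, hct⟩)
      rw [div_le_iff₀ (sub_pos.2 (hB t ht hct).1)] at hρt
      linarith
    · nlinarith [hxmax t ht]
  have htie : c ⬝ᵥ s₀ + ρ s₀ * g ⬝ᵥ s₀ = c ⬝ᵥ x + ρ s₀ * g ⬝ᵥ x := by
    have : ρ s₀ * (g ⬝ᵥ x - g ⬝ᵥ s₀) = c ⬝ᵥ s₀ - c ⬝ᵥ x := div_mul_cancel₀ _ (by linarith)
    linarith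
  refine ⟨ρ s₀, hν, ?_, s₀, ?_, hcs₀⟩ <;> refine mem_maxFace.2 ⟨by assumption, fun t ht => ?_⟩ <;>
    simp only [add_dotProduct, smul_dotProduct, smul_eq_mul]
  · exact hface t ht
  · exact htie ▸ hface t ht

lemma exists_convexHull_maxFace_eq_segment_of_lt {u c : ι → ℝ}
    (hu : u ∈ (convexHull ℝ (S : Set (ι → ℝ))).extremePoints ℝ)
    (hc : ∃ s ∈ S, c ⬝ᵥ u < c ⬝ᵥ s) :
    ∃ v ∈ S, c ⬝ᵥ u < c ⬝ᵥ v ∧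
      ∃ w, convexHull ℝ (maxFace S w : Set (ι → ℝ)) = segment ℝ u v := by
  obtain ⟨huS, g, hg⟩ := mem_extremePoints_convexHull_iff.1 hu
  obtain ⟨μ, hμ, huF⟩ := exists_mem_maxFace_add_smul huS hg c
  obtain ⟨ν, hν, huF, s, hsF, hcs⟩ := exists_pos_mem_maxFace_add_smul hμ huF hc
  have hsu : s ≠ u := by rintro rfl; exact hcs.false
  obtain ⟨v, hvF, hvu, w, hw⟩ := exists_convexHull_maxFace_eq_segment huF
    (fun t ht => hg t (maxFace_subset ht)) ⟨s, mem_erase.2 ⟨hsu, hsF⟩⟩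
  obtain ⟨ε, -, hε⟩ := exists_maxFace_add_smul_eq S (c + ν • g) w
  have hcv : c ⬝ᵥ u < c ⬝ᵥ v := by
    have htie := dotProduct_eq_of_mem_maxFace huF hvF
    simp only [add_dotProduct, smul_dotProduct, smul_eq_mul] at htie
    nlinarith [hg v (maxFace_subset hvF) hvu]
  exact ⟨v, maxFace_subset hvF, hcv, _, hε ▸ hw⟩

end MaxFace

section Paths

variable {n : ℕ}

lemma isEdgeOf_of_convexHull_maxFace_eq_segment {S : Finset (Fin n → ℝ)} {w u v : Fin n → ℝ}
    (h : convexHull ℝ (maxFace S w : Set (Fin n → ℝ)) = segment ℝ u v) (huv : u ≠ v) :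
    IsEdgeOf (convexHull ℝ (S : Set (Fin n → ℝ))) u v := by
  have hexp : IsExposed ℝ (convexHull ℝ (S : Set (Fin n → ℝ))) (segment ℝ u v) :=
    h ▸ isExposed_convexHull_maxFace S w
  refine ⟨huv, hexp.isExtreme.extremePoints_subset_extremePoints
    (left_mem_extremePoints_segment huv), hexp.isExtreme.extremePoints_subset_extremePoints ?_,
    hexp⟩
  rw [segment_symm]
  exact left_mem_extremePoints_segment huv.symm

lemma exists_shadow_pivot {S : Finset (Fin n → ℝ)} {x c g : Fin n → ℝ} {μ : ℝ} (hμ : 0 ≤ μ)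
    (hx : IsVertexOf (convexHull ℝ (S : Set (Fin n → ℝ))) x) (hxF : x ∈ maxFace S (c + μ • g))
    (hc : ∃ s ∈ S, c ⬝ᵥ x < c ⬝ᵥ s) :
    ∃ v, (∃ ν : ℝ, 0 ≤ ν ∧ v ∈ maxFace S (c + ν • g)) ∧
      IsEdgeOf (convexHull ℝ (S : Set (Fin n → ℝ))) x v ∧ c ⬝ᵥ x < c ⬝ᵥ v ∧
      g ⬝ᵥ v < g ⬝ᵥ x := by
  obtain ⟨ν, hν, hxF, hc⟩ := exists_pos_mem_maxFace_add_smul hμ hxF hc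
  have hxF' : x ∈ (convexHull ℝ (maxFace S (c + ν • g) : Set (Fin n → ℝ))).extremePoints ℝ :=
    inter_extremePoints_subset_extremePoints_of_subset
      (convexHull_mono (coe_subset.2 maxFace_subset)) ⟨subset_convexHull ℝ _ hxF, hx⟩
  obtain ⟨v, hvF, hcv, w, hw⟩ := exists_convexHull_maxFace_eq_segment_of_lt hxF' hc
  obtain ⟨ε, -, hε⟩ := exists_maxFace_add_smul_eq S (c + ν • g) w
  have hgv : g ⬝ᵥ v < g ⬝ᵥ x := by
    have htie := dotProduct_eq_of_mem_maxFace hxF hvF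
    simp only [add_dotProduct, smul_dotProduct, smul_eq_mul] at htie
    nlinarith
  exact ⟨v, ⟨ν, hν.le, hvF⟩,
    isEdgeOf_of_convexHull_maxFace_eq_segment (hε ▸ hw) (by rintro rfl; exact hcv.false),
    hcv, hgv⟩

lemma isMonotonePath_zero {P : Set (Fin n → ℝ)} {c x : Fin n → ℝ} (hx : IsVertexOf P x) :
    IsMonotonePath P c 0 fun _ => x :=
  ⟨fun _ => hx, fun i => i.elim0⟩

lemma IsMonotonePath.cons {P : Set (Fin n → ℝ)} {c x : Fin n → ℝ} {m : ℕ}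
    {p : Fin (m + 1) → Fin n → ℝ} (hp : IsMonotonePath P c m p) (hx : IsEdgeOf P x (p 0))
    (hc : c ⬝ᵥ x < c ⬝ᵥ p 0) :
    IsMonotonePath P c (m + 1) (Fin.cons x p) := by
  refine ⟨Fin.cases hx.2.1 hp.1, Fin.cases ⟨hx, hc⟩ fun i => ?_⟩
  simpa [← Fin.succ_castSucc] using hp.2 i

theorem exists_monotonePath {S : Finset (Fin n → ℝ)} {c g : Fin n → ℝ}
    (hg_int : ∀ v, IsVertexOf (convexHull ℝ (S : Set (Fin n → ℝ))) v → ∃ z : ℤ, g ⬝ᵥ v = z)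
    (t : ℕ) (x : Fin n → ℝ) (hx : IsVertexOf (convexHull ℝ (S : Set (Fin n → ℝ))) x)
    (hxF : ∃ μ : ℝ, 0 ≤ μ ∧ x ∈ maxFace S (c + μ • g))
    (hgx : ∀ v, IsVertexOf (convexHull ℝ (S : Set (Fin n → ℝ))) v → g ⬝ᵥ x - g ⬝ᵥ v ≤ t) :
    ∃ m ≤ t, ∃ p : Fin (m + 1) → Fin n → ℝ,
      IsMonotonePath (convexHull ℝ (S : Set (Fin n → ℝ))) c m p ∧ p 0 = x ∧
        ∀ y ∈ convexHull ℝ (S : Set (Fin n → ℝ)), c ⬝ᵥ y ≤ c ⬝ᵥ p (Fin.last m) := by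
  induction t using Nat.strong_induction_on generalizing x with | _ t ih => ?_
  by_cases hopt : ∀ s ∈ S, c ⬝ᵥ s ≤ c ⬝ᵥ x
  · exact ⟨0, t.zero_le, _, isMonotonePath_zero hx, rfl,
      fun y hy => dotProduct_le_of_mem_convexHull hopt hy⟩
  push Not at hopt
  obtain ⟨μ, hμ, hxF⟩ := hxF
  obtain ⟨v, hvF, hedge, hcv, hgv⟩ := exists_shadow_pivot hμ hx hxF hopt
  have hv : IsVertexOf _ v := hedge.2.2.1
  -- The potential `g` is integral at vertices, so each pivot lowers it by at least one.
  have hdrop : g ⬝ᵥ v + 1 ≤ g ⬝ᵥ x := by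
    obtain ⟨zv, hzv⟩ := hg_int v hv
    obtain ⟨zx, hzx⟩ := hg_int x hx
    rw [hzv, hzx] at hgv ⊢
    exact_mod_cast Int.add_one_le_of_lt (by exact_mod_cast hgv)
  obtain ⟨t, rfl⟩ : ∃ t', t = t' + 1 :=
    Nat.exists_eq_add_one.2 (by exact_mod_cast (by linarith [hgx v hv] : (0 : ℝ) < t))
  obtain ⟨m, hm, p, hp, hp0, hpmax⟩ := ih t t.lt_succ_self v hv hvF fun v' hv' => by
    push_cast at hgx
    linarith [hgx v' hv']
  refine ⟨m + 1, by omega, Fin.cons x p, IsMonotonePath.cons hp (hp0 ▸ hedge) (hp0 ▸ hcv), rfl, ?_⟩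
  simpa [← Fin.succ_last] using hpmax

end Paths

section Inequalities

variable {m ι : Type*} [Fintype m] [Fintype ι] (a : m → ι → ℝ) (b : m → ℝ)

lemma eq_of_forall_tight {u x : ι → ℝ}
    (hu : u ∈ {y | ∀ i, a i ⬝ᵥ y ≤ b i}.extremePoints ℝ) (hx : ∀ i, a i ⬝ᵥ x ≤ b i)
    (htight : ∀ i, a i ⬝ᵥ u = b i → a i ⬝ᵥ x = b i) : x = u := by
  have hline : ∀ (θ : ℝ) i, a i ⬝ᵥ (u + θ • (u - x)) = a i ⬝ᵥ u + θ * (a i ⬝ᵥ u - a i ⬝ᵥ x) :=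
    fun θ i => by simp only [dotProduct_add, dotProduct_smul, dotProduct_sub, smul_eq_mul]
  have hev : ∀ᶠ θ : ℝ in 𝓝 0, ∀ i, a i ⬝ᵥ (u + θ • (u - x)) ≤ b i := by
    refine eventually_all.2 fun i => ?_
    simp only [hline]
    rcases (hu.1 i).eq_or_lt with h | h
    · exact Eventually.of_forall fun θ => by rw [h, htight i h, sub_self, mul_zero, add_zero]
    · have hlim : Tendsto (fun θ : ℝ => a i ⬝ᵥ u + θ * (a i ⬝ᵥ u - a i ⬝ᵥ x)) (𝓝 0)
          (𝓝 (a i ⬝ᵥ u)) := (by fun_prop : Continuous _).tendsto' 0 _ (by simp)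
      exact (hlim.eventually (gt_mem_nhds h)).mono fun θ hθ => hθ.le
  obtain ⟨ε, hε, hεpos⟩ := ((hev.filter_mono nhdsWithin_le_nhds).and
    (self_mem_nhdsWithin (s := Ioi (0 : ℝ)))).exists
  -- `u` lies strictly between `x` and the point `u + ε • (u - x)` of the polyhedron.
  refine hu.2 hx hε
    ⟨ε / (1 + ε), 1 / (1 + ε), by positivity, by positivity, by field_simp; ring, ?_⟩
  ext j
  simp only [Pi.add_apply, Pi.smul_apply, Pi.sub_apply, smul_eq_mul]
  field_simp
  ring

lemma exists_tight_rows_card_le_finrank {u : ι → ℝ}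
    (hu : u ∈ {y | ∀ i, a i ⬝ᵥ y ≤ b i}.extremePoints ℝ) :
    ∃ I : Finset m, I.card ≤ finrank ℝ (affineSpan ℝ {y | ∀ i, a i ⬝ᵥ y ≤ b i}).direction ∧
      (∀ i ∈ I, a i ⬝ᵥ u = b i) ∧
      ∀ x, (∀ i, a i ⬝ᵥ x ≤ b i) → (∀ i ∈ I, a i ⬝ᵥ x = b i) → x = u := by
  classical
  set P := {y | ∀ i, a i ⬝ᵥ y ≤ b i}
  set V := (affineSpan ℝ P).direction
  -- Tight rows, as functionals on `V`: an independent family spanning all of them has at most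
  -- `dim V` members, and `x - u ∈ V` is killed by all of them once it is killed by that family.
  let φ : m → Module.Dual ℝ V := fun i => (dotProductBilin ℝ ℝ (a i)).domRestrict V
  obtain ⟨J, hJ, -, hspan, hind⟩ := exists_linearIndepOn_extension (linearIndepOn_empty ℝ φ)
    (empty_subset {i | a i ⬝ᵥ u = b i})
  refine ⟨J.toFinset, ?_, fun i hi => hJ (mem_toFinset.1 hi),
    fun x hx hxJ => eq_of_forall_tight a b hu hx fun i hi => ?_⟩
  · rw [toFinset_card]
    exact hind.fintype_card_le_finrank.trans Subspace.dual_finrank_eq.le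
  · have hxu : x -ᵥ u ∈ V :=
      AffineSubspace.vsub_mem_direction (subset_affineSpan ℝ P hx) (subset_affineSpan ℝ P hu.1)
    have hker : Submodule.span ℝ (φ '' J) ≤ LinearMap.ker (Module.Dual.eval ℝ V ⟨_, hxu⟩) := by
      refine Submodule.span_le.2 ?_
      rintro _ ⟨j, hj, rfl⟩
      show a j ⬝ᵥ (x - u) = 0
      rw [dotProduct_sub, hxJ j (mem_toFinset.2 hj), (hJ hj : a j ⬝ᵥ u = b j), sub_self]
    have : a i ⬝ᵥ (x - u) = 0 := hker (hspan (mem_image_of_mem φ hi))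
    rw [dotProduct_sub, sub_eq_zero] at this
    exact this ▸ hi

lemma exists_sum_rows_dotProduct_lt {u : ι → ℝ}
    (hu : u ∈ {y | ∀ i, a i ⬝ᵥ y ≤ b i}.extremePoints ℝ) :
    ∃ I : Finset m, I.card ≤ finrank ℝ (affineSpan ℝ {y | ∀ i, a i ⬝ᵥ y ≤ b i}).direction ∧
      ∀ x, (∀ i, a i ⬝ᵥ x ≤ b i) → x ≠ u → (∑ i ∈ I, a i) ⬝ᵥ x < (∑ i ∈ I, a i) ⬝ᵥ u := by
  obtain ⟨I, hcard, htight, huniq⟩ := exists_tight_rows_card_le_finrank a b hu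
  refine ⟨I, hcard, fun x hx hxu => ?_⟩
  rw [sum_dotProduct, sum_dotProduct]
  obtain ⟨i, hi, hlt⟩ : ∃ i ∈ I, a i ⬝ᵥ x < a i ⬝ᵥ u := by
    by_contra! h
    exact hxu (huniq x hx fun i hi => le_antisymm (hx i) (htight i hi ▸ h i hi))
  exact sum_lt_sum (fun i hi => htight i hi ▸ hx i) ⟨i, hi, hlt⟩

end Inequalities

section Lattice

variable {ι : Type*} [Fintype ι]

lemma exists_intCast_dotProduct (a : ι → ℤ) {v : ι → ℝ} (hv : ∀ j, ∃ z : ℤ, v j = z) :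
    ∃ z : ℤ, (fun j => (a j : ℝ)) ⬝ᵥ v = z := by
  choose z hz using hv
  exact ⟨a ⬝ᵥ z, by simp [dotProduct, hz]⟩

lemma dotProduct_sub_le {g x y : ι → ℝ} {G k : ℝ} (hg : ∀ j, |g j| ≤ G)
    (hx : ∀ j, 0 ≤ x j ∧ x j ≤ k) (hy : ∀ j, 0 ≤ y j ∧ y j ≤ k) :
    g ⬝ᵥ x - g ⬝ᵥ y ≤ Fintype.card ι * G * k := by
  rw [← dotProduct_sub]
  calc g ⬝ᵥ (x - y) ≤ ∑ _j : ι, G * k := sum_le_sum fun j _ => ?_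
    _ = _ := by simp [mul_assoc]
  have hxy : |x j - y j| ≤ k :=
    abs_sub_le_iff.2 ⟨by linarith [hx j, hy j], by linarith [hx j, hy j]⟩
  calc g j * (x - y) j ≤ |g j| * |x j - y j| := (le_abs_self _).trans (abs_mul _ _).le
    _ ≤ G * k := mul_le_mul (hg j) hxy (abs_nonneg _) ((abs_nonneg _).trans (hg j))

lemma abs_sum_le_card_mul_matNormInf {r n : ℕ} (A : Matrix (Fin r) (Fin n) ℤ)
    (I : Finset (Fin r)) (j : Fin n) :
    |∑ i ∈ I, (A i j : ℝ)| ≤ I.card * matNormInf A := by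
  refine (abs_sum_le_sum_abs _ _).trans ((sum_le_card_nsmul _ _ _ fun i _ => ?_).trans
    (nsmul_eq_mul _ _).le)
  rw [← Int.cast_abs, Int.abs_eq_natAbs, Int.cast_natCast, Nat.cast_le]
  exact le_sup (f := fun p : Fin r × Fin n => (A p.1 p.2).natAbs) (mem_univ (i, j))

end Lattice

end LatticePolytope

theorem lattice_shadow_pivot_bound_general {r n : ℕ}
    (A : Matrix (Fin r) (Fin n) ℤ) (b : Fin r → ℤ) (k : ℕ)
    (P : Set (Fin n → ℝ))
    (hPdef : P = {x : Fin n → ℝ | ∀ i : Fin r, ∑ j, (A i j : ℝ) * x j ≤ (b i : ℝ)})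
    (hP : IsPolytope P)
    (hsub : P ⊆ {x : Fin n → ℝ | ∀ i, 0 ≤ x i ∧ x i ≤ (k : ℝ)})
    (hvert : ∀ v, IsVertexOf P v → ∀ i, ∃ z : ℤ, v i = (z : ℝ))
    (d : ℕ) (hd : d = polytopeDim P)
    (c : Fin n → ℝ) (u : Fin n → ℝ) (hu : IsVertexOf P u) :
    ∃ (m : ℕ) (p : Fin (m + 1) → (Fin n → ℝ)),
      m ≤ d * n * k * matNormInf A ∧
      IsMonotonePath P c m p ∧
      p 0 = u ∧
      (∀ x ∈ P, dotp c x ≤ dotp c (p (Fin.last m))) := by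
  obtain ⟨S, -, rfl⟩ := hP
  set a : Fin r → Fin n → ℝ := fun i j => A i j
  have hS : convexHull ℝ (S : Set (Fin n → ℝ)) = {x | ∀ i, a i ⬝ᵥ x ≤ b i} := hPdef
  obtain ⟨I, hId, hI⟩ :=
    LatticePolytope.exists_sum_rows_dotProduct_lt a (fun i => b i) (hS ▸ hu)
  rw [← hS, ← polytopeDim, ← hd] at hId
  have hg : ∑ i ∈ I, a i = fun j => ((∑ i ∈ I, A i j : ℤ) : ℝ) := by
    ext j
    simp [a]
  obtain ⟨μ, hμ, huF⟩ := LatticePolytope.exists_mem_maxFace_add_smul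
    (extremePoints_convexHull_subset hu) (fun s hs => hI s (hS.subset (subset_convexHull ℝ _ hs))) c
  have hbound : ∀ v, IsVertexOf (convexHull ℝ (S : Set (Fin n → ℝ))) v →
      (∑ i ∈ I, a i) ⬝ᵥ u - (∑ i ∈ I, a i) ⬝ᵥ v ≤ (d * n * k * matNormInf A : ℕ) := fun v hv =>
    calc _ ≤ (n : ℝ) * (I.card * matNormInf A) * k := by
          simpa using LatticePolytope.dotProduct_sub_le (fun j => by
            rw [Finset.sum_apply]; exact LatticePolytope.abs_sum_le_card_mul_matNormInf A I j)
            (hsub hu.1) (hsub hv.1)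
      _ = ((n * (I.card * matNormInf A * k) : ℕ) : ℝ) := by push_cast; ring
      _ ≤ _ := Nat.cast_le.2 <| by
          rw [show d * n * k * matNormInf A = n * (d * matNormInf A * k) by ring]
          gcongr
  obtain ⟨m, hm, p, hp, hp0, hpmax⟩ := LatticePolytope.exists_monotonePath
    (fun v hv => hg ▸ LatticePolytope.exists_intCast_dotProduct _ (hvert v hv)) _ u hu
    ⟨μ, hμ, huF⟩ hbound
  exact ⟨m, p, hm, hp, hp0, hpmax⟩

/-- **Theorem (lattice shadow pivot rule bound).**
Let `A` be an integer matrix, `b ∈ ℤ^r`, and suppose `P = {x : Ax ≤ b} ⊆ [0,k]^n`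
is a bounded polytope of dimension `d ≥ 1` all of whose vertices are integral.
Then for every `c ∈ ℝ^n` and every vertex `u` of `P` there is a `c`-monotone path
of length at most `d·n·k·‖A‖∞` from `u` to a vertex maximizing `cᵀx` over `P`. -/
theorem lattice_shadow_pivot_bound {r n : ℕ}
    (A : Matrix (Fin r) (Fin n) ℤ) (b : Fin r → ℤ) (k : ℕ)
    (P : Set (Fin n → ℝ))
    (hPdef : P = {x : Fin n → ℝ | ∀ i : Fin r, ∑ j, (A i j : ℝ) * x j ≤ (b i : ℝ)})
    (hP : IsPolytope P)
    (hsub : P ⊆ {x : Fin n → ℝ | ∀ i, 0 ≤ x i ∧ x i ≤ (k : ℝ)})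
    (hvert : ∀ v, IsVertexOf P v → ∀ i, ∃ z : ℤ, v i = (z : ℝ))
    (d : ℕ) (hd : d = polytopeDim P) (hd1 : 1 ≤ d)
    (c : Fin n → ℝ) (u : Fin n → ℝ) (hu : IsVertexOf P u) :
    ∃ (m : ℕ) (p : Fin (m + 1) → (Fin n → ℝ)),
      m ≤ d * n * k * matNormInf A ∧
      IsMonotonePath P c m p ∧
      p 0 = u ∧
      (∀ x ∈ P, dotp c x ≤ dotp c (p (Fin.last m))) :=
  lattice_shadow_pivot_bound_general A b k P hPdef hP hsub hvert d hd c u hu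
end

section
/- Let n, k ≥ 1 be integers, let σ = (π, ε) be a signed permutation of [n], let α ≥ 2k+1 be real, and let x_σ ∈ ℝ^n be the associated vector. Then for all x, y ∈ ℤ^n with all coordinates in [−k, k], one has x_σᵀx < x_σᵀy if and only if there exists j ∈ {1,…,n} such that ε(π⁻¹(j))·(y_{π⁻¹(j)} − x_{π⁻¹(j)}) > 0 and x_{π⁻¹(i)} = y_{π⁻¹(i)} for all i with j < i ≤ n. That is, x_σᵀ induces the lexicographic order on the signed, permuted coordinates of lattice points of [−k,k]^n. -/
open Set Finset

/-- The vector `x_σ` associated to a signed permutation `σ = (π, ε)` of `[n]` and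
a real number `α`, with `(x_σ)_i = ε(i)·α^{π(i)}` where `π(i)` ranges over `{1,…,n}`. -/
def signedPermVec {n : ℕ} (π : Equiv.Perm (Fin n)) (ε : Fin n → ℝ) (α : ℝ) : Fin n → ℝ :=
  fun i => ε i * α ^ ((π i : ℕ) + 1)

/-!
Reindexing by `π`, `x_σᵀ(y - x) = α · ∑ⱼ dⱼ αʲ` with digits `dⱼ = ε(π⁻¹ j)(y - x)_{π⁻¹ j}`,
which are integers with `|dⱼ| ≤ 2k ≤ α - 1`. Such a signed base-`α` expansion has the sign of
its top nonzero digit `dⱼ`, since the digits below it contribute at most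
`2k(αʲ - 1)/(α - 1) < αʲ` in absolute value.
-/

theorem exists_max_ne_zero {ι M : Type*} [Fintype ι] [LinearOrder ι] [Zero M] {f : ι → M}
    (h : ∃ i, f i ≠ 0) : ∃ j, f j ≠ 0 ∧ ∀ i, j < i → f i = 0 := by
  classical
  obtain ⟨i, hi⟩ := h
  obtain ⟨j, hj, hmax⟩ :=
    exists_max_image (univ.filter (f · ≠ 0)) id ⟨i, mem_filter.2 ⟨mem_univ i, hi⟩⟩
  refine ⟨j, (mem_filter.1 hj).2, fun i hji => ?_⟩
  by_contra hi
  exact (hmax i (mem_filter.2 ⟨mem_univ i, hi⟩)).not_gt hji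

section SignedDigits

variable {n : ℕ} {α B : ℝ} {d : Fin n → ℝ}

theorem abs_sum_Iio_mul_pow_lt (hd : ∀ i, |d i| ≤ B) (hα : B + 1 ≤ α) (j : Fin n) :
    |∑ i ∈ Iio j, d i * α ^ (i : ℕ)| < α ^ (j : ℕ) := by
  have hB : 0 ≤ B := (abs_nonneg _).trans (hd j)
  have hα0 : 0 ≤ α := by linarith
  have hgeom : (∑ i ∈ range j, α ^ i) * (α - 1) = α ^ (j : ℕ) - 1 := geom_sum_mul α j
  calc |∑ i ∈ Iio j, d i * α ^ (i : ℕ)|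
      ≤ ∑ i ∈ Iio j, B * α ^ (i : ℕ) := by
        refine (abs_sum_le_sum_abs _ _).trans (sum_le_sum fun i _ => ?_)
        rw [abs_mul, abs_pow, abs_of_nonneg hα0]
        exact mul_le_mul_of_nonneg_right (hd i) (by positivity)
    _ = B * ∑ i ∈ range j, α ^ i := by
        rw [← mul_sum, ← Nat.Iio_eq_range, ← Fin.map_valEmbedding_Iio, sum_map]
        rfl
    _ ≤ (α - 1) * ∑ i ∈ range j, α ^ i :=
        mul_le_mul_of_nonneg_right (by linarith) (sum_nonneg fun i _ => by positivity)
    _ < α ^ (j : ℕ) := by linarith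

theorem sum_eq_sum_Iio_add_of_forall_gt {j : Fin n} (hj : ∀ i, j < i → d i = 0) :
    ∑ i, d i * α ^ (i : ℕ) = ∑ i ∈ Iio j, d i * α ^ (i : ℕ) + d j * α ^ (j : ℕ) := by
  rw [← sum_subset (subset_univ (Iic j)), Iic_eq_cons_Iio, sum_cons, add_comm]
  intro i _ hi
  rw [hj i (not_le.1 (mem_Iic.not.1 hi)), zero_mul]

theorem sum_mul_pow_pos_iff_of_top_digit (hd : ∀ i, |d i| ≤ B) (hα : B + 1 ≤ α) {j : Fin n}
    (hj : ∀ i, j < i → d i = 0) (hdj : 1 ≤ |d j|) :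
    0 < ∑ i, d i * α ^ (i : ℕ) ↔ 0 < d j := by
  have hlow := abs_lt.1 (abs_sum_Iio_mul_pow_lt hd hα j)
  have hpow : 0 < α ^ (j : ℕ) := pow_pos (by linarith [(abs_nonneg _).trans (hd j)]) _
  rw [sum_eq_sum_Iio_add_of_forall_gt hj]
  rcases le_abs'.1 hdj with hneg | hpos
  · exact iff_of_false (not_lt.2 (by nlinarith)) (by linarith)
  · exact iff_of_true (by nlinarith) (by linarith)

theorem sum_mul_pow_pos_iff (hd : ∀ i, |d i| ≤ B) (hd1 : ∀ i, d i ≠ 0 → 1 ≤ |d i|)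
    (hα : B + 1 ≤ α) :
    0 < ∑ i, d i * α ^ (i : ℕ) ↔ ∃ j, 0 < d j ∧ ∀ i, j < i → d i = 0 := by
  constructor
  · intro hsum
    obtain ⟨i, -, hi⟩ := exists_ne_zero_of_sum_ne_zero hsum.ne'
    obtain ⟨j, hj0, hj⟩ := exists_max_ne_zero ⟨i, left_ne_zero_of_mul hi⟩
    exact ⟨j, (sum_mul_pow_pos_iff_of_top_digit hd hα hj (hd1 j hj0)).1 hsum, hj⟩
  · rintro ⟨j, hdj, hj⟩
    exact (sum_mul_pow_pos_iff_of_top_digit hd hα hj (hd1 j hdj.ne')).2 hdj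

end SignedDigits

theorem sum_signedPermVec_mul_sub {n : ℕ} (π : Equiv.Perm (Fin n)) (ε : Fin n → ℝ) (α : ℝ)
    (x y : Fin n → ℝ) :
    ∑ i, signedPermVec π ε α i * y i - ∑ i, signedPermVec π ε α i * x i =
      α * ∑ j, ε (π.symm j) * (y (π.symm j) - x (π.symm j)) * α ^ (j : ℕ) := by
  rw [← sum_sub_distrib, ← π.symm.sum_comp, mul_sum]
  refine sum_congr rfl fun j _ => ?_
  simp only [signedPermVec, Equiv.apply_symm_apply]
  ring

theorem abs_sign_mul_intCast_sub {s : ℝ} (hs : s = 1 ∨ s = -1) (a b : ℤ) :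
    |s * ((a : ℝ) - b)| = ((|a - b| : ℤ) : ℝ) := by
  rcases hs with rfl | rfl <;> simp [abs_sub_comm]

theorem signedPermVec_lex_order_general {n : ℕ} (k : ℕ)
    (π : Equiv.Perm (Fin n)) (ε : Fin n → ℝ) (hε : ∀ i, ε i = 1 ∨ ε i = -1)
    (α : ℝ) (hα : 2 * (k : ℝ) + 1 ≤ α)
    (x y : Fin n → ℤ)
    (hx : ∀ i, -(k : ℤ) ≤ x i ∧ x i ≤ (k : ℤ))
    (hy : ∀ i, -(k : ℤ) ≤ y i ∧ y i ≤ (k : ℤ)) :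
    (∑ i, signedPermVec π ε α i * (x i : ℝ)) <
        (∑ i, signedPermVec π ε α i * (y i : ℝ)) ↔
      ∃ j : Fin n,
        0 < ε (π.symm j) * ((y (π.symm j) : ℝ) - (x (π.symm j) : ℝ)) ∧
        ∀ i : Fin n, j < i → x (π.symm i) = y (π.symm i) := by
  set d : Fin n → ℝ := fun j => ε (π.symm j) * ((y (π.symm j) : ℝ) - (x (π.symm j) : ℝ))
  have habs (j : Fin n) : |d j| = ((|y (π.symm j) - x (π.symm j)| : ℤ) : ℝ) :=
    abs_sign_mul_intCast_sub (hε _) _ _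
  have hd (j : Fin n) : |d j| ≤ 2 * k := by
    rw [habs]
    have := hx (π.symm j)
    have := hy (π.symm j)
    exact_mod_cast abs_le.2 ⟨by omega, by omega⟩
  have hzero (j : Fin n) : d j = 0 ↔ x (π.symm j) = y (π.symm j) := by
    rw [← abs_eq_zero, habs, Int.cast_eq_zero, abs_eq_zero, sub_eq_zero, eq_comm]
  have hd1 (j : Fin n) (hj : d j ≠ 0) : 1 ≤ |d j| := by
    rw [habs]
    exact_mod_cast Int.one_le_abs (sub_ne_zero.2 fun h => hj ((hzero j).2 h.symm))
  have hα0 : 0 < α := by linarith [(Nat.cast_nonneg k : (0 : ℝ) ≤ k)]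
  rw [← sub_pos, sum_signedPermVec_mul_sub, mul_pos_iff_of_pos_left hα0,
    sum_mul_pow_pos_iff hd hd1 hα]
  exact exists_congr fun j => and_congr_right' (forall₂_congr fun i _ => hzero i)

/-- **Lemma (x_σ induces the lexicographic order).**
Let `n, k ≥ 1`, let `σ = (π, ε)` be a signed permutation of `[n]`, let
`α ≥ 2k+1`, and let `x_σ` be the associated vector. Then for all lattice points
`x, y ∈ ℤ^n ∩ [−k,k]^n`, one has `x_σᵀx < x_σᵀy` if and only if there exists
`j ∈ [n]` with `ε(π⁻¹(j))·(y_{π⁻¹(j)} − x_{π⁻¹(j)}) > 0` and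
`x_{π⁻¹(i)} = y_{π⁻¹(i)}` for all `i > j`. -/
theorem signedPermVec_lex_order {n : ℕ} (k : ℕ) (hn : 1 ≤ n) (hk : 1 ≤ k)
    (π : Equiv.Perm (Fin n)) (ε : Fin n → ℝ) (hε : ∀ i, ε i = 1 ∨ ε i = -1)
    (α : ℝ) (hα : 2 * (k : ℝ) + 1 ≤ α)
    (x y : Fin n → ℤ)
    (hx : ∀ i, -(k : ℤ) ≤ x i ∧ x i ≤ (k : ℤ))
    (hy : ∀ i, -(k : ℤ) ≤ y i ∧ y i ≤ (k : ℤ)) :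
    (∑ i, signedPermVec π ε α i * (x i : ℝ)) <
        (∑ i, signedPermVec π ε α i * (y i : ℝ)) ↔
      ∃ j : Fin n,
        0 < ε (π.symm j) * ((y (π.symm j) : ℝ) - (x (π.symm j) : ℝ)) ∧
        ∀ i : Fin n, j < i → x (π.symm i) = y (π.symm i) :=
  signedPermVec_lex_order_general k π ε hε α hα x y hx hy
end

section
/- Let P ⊆ ℝ^n be a (0,k)-lattice polytope, let σ = (π, ε) be a signed permutation of [n], let α ≥ 2k+1 be real, and let x_σ ∈ ℝ^n be the associated vector. Define a decreasing chain of sets by G_n = P and, for i = n, n−1, …, 1, G_{i−1} = {x ∈ G_i : ε(π⁻¹(i))·x_{π⁻¹(i)} = max_{y ∈ G_i} ε(π⁻¹(i))·y_{π⁻¹(i)}}. Then G_0 is a singleton {v}, where v is the unique vertex of P maximizing x ↦ x_σᵀx over P. -/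
/-!
Each `G i` is the face of `G (i + 1)` exposed by the signed coordinate functional
`x ↦ ε(π⁻¹ i) x(π⁻¹ i)`, so `G 0` is an extreme subset of `P`; it is nonempty by compactness,
and its points agree in every signed coordinate, so `G 0 = {v}` with `v` a vertex of `P`.

Any vertex `w ≠ v` of `P` is lexicographically smaller than `v`: at the largest index `m` where
the signed coordinates differ, `w` lies in `G (m + 1)` and hence loses to `v ∈ G m`. The
differences are integers of absolute value at most `k`, so with `α ≥ 2k + 1` the leading term
`α^(m+1)` outweighs `k (α + ⋯ + α^m) ≤ (α^(m+1) - α) / 2`, giving `x_σᵀw < x_σᵀv`. Finally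
`x_σ` attains its maximum over `P` at some vertex (an extreme point of the exposed face of
maximizers), and that vertex must be `v`.
-/

open Set Finset

/-- A `(0,k)`-lattice polytope: a polytope all of whose vertices lie in
`ℤ^n ∩ [0,k]^n`. -/
def IsLatticePolytope {n : ℕ} (k : ℕ) (P : Set (Fin n → ℝ)) : Prop :=
  IsPolytope P ∧ ∀ v, IsVertexOf P v → ∀ i, (∃ z : ℤ, v i = (z : ℝ)) ∧ 0 ≤ v i ∧ v i ≤ (k : ℝ)

section LexicographicFaces

variable {E : Type*} {n : ℕ}

def IsMaximizerChain (ℓ : Fin n → E → ℝ) (G : ℕ → Set E) : Prop :=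
  ∀ i : Fin n, G i = {x ∈ G (i + 1) | ∀ y ∈ G (i + 1), ℓ i y ≤ ℓ i x}

variable {G : ℕ → Set E} {ℓ : Fin n → E → ℝ}

theorem chain_subset_of_le
    (hG : IsMaximizerChain ℓ G) {i j : ℕ} (hij : i ≤ j) (hjn : j ≤ n) : G i ⊆ G j := by
  induction j, hij using Nat.le_induction with
  | base => exact subset_rfl
  | succ j _ ih =>
    exact (ih (by omega)).trans ((hG ⟨j, hjn⟩).trans_subset (sep_subset _ _))

theorem apply_eq_of_mem_chain_zero
    (hG : IsMaximizerChain ℓ G) {x y : E} (hx : x ∈ G 0) (hy : y ∈ G 0) (i : Fin n) :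
    ℓ i x = ℓ i y := by
  have h0i := chain_subset_of_le hG (Nat.zero_le i) i.isLt.le
  rw [hG i] at h0i
  exact le_antisymm ((h0i hy).2 x (h0i hx).1) ((h0i hx).2 y (h0i hy).1)

theorem mem_chain_of_apply_eq_of_le
    (hG : IsMaximizerChain ℓ G) {u v : E} (hu : u ∈ G n) (hv : v ∈ G 0) {i : ℕ} (hi : i ≤ n)
    (huv : ∀ t : Fin n, i ≤ t → ℓ t u = ℓ t v) : u ∈ G i := by
  induction hi using Nat.decreasingInduction with
  | self => exact hu
  | of_succ i hi ih =>
    have hvi : v ∈ G i := chain_subset_of_le hG (Nat.zero_le i) hi.le hv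
    rw [hG ⟨i, hi⟩] at hvi ⊢
    exact ⟨ih fun t ht => huv t (by omega),
      fun y hy => (hvi.2 y hy).trans_eq (huv ⟨i, hi⟩ le_rfl).symm⟩

theorem apply_le_of_apply_eq_of_gt
    (hG : IsMaximizerChain ℓ G) {u v : E} (hu : u ∈ G n) (hv : v ∈ G 0) (m : Fin n)
    (huv : ∀ t : Fin n, m < t → ℓ t u = ℓ t v) : ℓ m u ≤ ℓ m v := by
  have hum : u ∈ G (m + 1) :=
    mem_chain_of_apply_eq_of_le hG hu hv m.isLt fun t ht => huv t (Fin.lt_def.2 ht)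
  have hvm : v ∈ G m := chain_subset_of_le hG (Nat.zero_le _) m.isLt.le hv
  rw [hG m] at hvm
  exact hvm.2 u hum

end LexicographicFaces

section ExposedFaces

variable {E : Type*} [AddCommGroup E] [Module ℝ E] [TopologicalSpace E] {n : ℕ}
  {G : ℕ → Set E} {ℓ : Fin n → StrongDual ℝ E}

theorem isExtreme_chain (hG : IsMaximizerChain (fun i => ℓ i) G) {i : ℕ} (hi : i ≤ n) :
    IsExtreme ℝ (G n) (G i) := by
  induction hi using Nat.decreasingInduction with
  | self => exact IsExtreme.rfl
  | of_succ i hi ih =>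
    rw [hG ⟨i, hi⟩]
    exact ih.trans (ContinuousLinearMap.toExposed.isExposed (l := ℓ ⟨i, hi⟩)).isExtreme

theorem isCompact_chain_and_nonempty [T2Space E]
    (hG : IsMaximizerChain (fun i => ℓ i) G)
    (hcomp : IsCompact (G n)) (hne : (G n).Nonempty) {i : ℕ} (hi : i ≤ n) :
    IsCompact (G i) ∧ (G i).Nonempty := by
  induction hi using Nat.decreasingInduction with
  | self => exact ⟨hcomp, hne⟩
  | of_succ i hi ih =>
    rw [hG ⟨i, hi⟩]
    obtain ⟨x, hx, hxmax⟩ := ih.1.exists_isMaxOn ih.2 (ℓ ⟨i, hi⟩).continuous.continuousOn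
    exact ⟨(ContinuousLinearMap.toExposed.isExposed (l := ℓ ⟨i, hi⟩)).isCompact ih.1,
      x, hx, hxmax⟩

theorem exists_chain_zero_eq_singleton [T2Space E]
    (hG : IsMaximizerChain (fun i => ℓ i) G)
    (hcomp : IsCompact (G n)) (hne : (G n).Nonempty)
    (hsep : ∀ x y, (∀ i, ℓ i x = ℓ i y) → x = y) :
    ∃ v, G 0 = {v} ∧ v ∈ (G n).extremePoints ℝ := by
  obtain ⟨v, hv⟩ := (isCompact_chain_and_nonempty hG hcomp hne (Nat.zero_le n)).2
  have hG0 : G 0 = {v} := eq_singleton_iff_unique_mem.2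
    ⟨hv, fun x hx => hsep x v (apply_eq_of_mem_chain_zero hG hx hv)⟩
  exact ⟨v, hG0, (hG0 ▸ isExtreme_chain hG (Nat.zero_le n)).mem_extremePoints⟩

theorem exists_mem_extremePoints_forall_le [T2Space E] [IsTopologicalAddGroup E]
    [ContinuousSMul ℝ E] [LocallyConvexSpace ℝ E] {A : Set E} (hcomp : IsCompact A)
    (hne : A.Nonempty) (l : StrongDual ℝ E) :
    ∃ w ∈ A.extremePoints ℝ, ∀ y ∈ A, l y ≤ l w := by
  have hexp := ContinuousLinearMap.toExposed.isExposed (l := l) (A := A)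
  obtain ⟨x, hx, hxmax⟩ := hcomp.exists_isMaxOn hne l.continuous.continuousOn
  obtain ⟨w, hw⟩ := (hexp.isCompact hcomp).extremePoints_nonempty ⟨x, hx, hxmax⟩
  exact ⟨w, hexp.isExtreme.extremePoints_subset_extremePoints hw, hw.1.2⟩

end ExposedFaces

section WeightedSums

theorem mul_sum_range_pow_succ_le {β k : ℝ} (hk : 0 ≤ k) (hβ : 2 * k + 1 ≤ β) (m : ℕ) :
    k * ∑ s ∈ range m, β ^ (s + 1) ≤ (β ^ (m + 1) - β) / 2 := by
  induction m with
  | zero => simp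
  | succ m ih =>
    have hpow : 0 ≤ β ^ (m + 1) := pow_nonneg (by linarith) _
    rw [sum_range_succ, mul_add, pow_succ β (m + 1)]
    nlinarith

theorem exists_ne_zero_forall_gt_eq_zero {ι M : Type*} [Fintype ι] [LinearOrder ι] [Zero M]
    {d : ι → M} (hd : d ≠ 0) : ∃ m, d m ≠ 0 ∧ ∀ t, m < t → d t = 0 := by
  classical
  obtain ⟨m, hm, hmax⟩ := (Finset.univ.filter fun t => d t ≠ 0).exists_max_image id
    (by simpa [Finset.Nonempty, funext_iff] using hd)
  refine ⟨m, (mem_filter.1 hm).2, fun t hmt => ?_⟩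
  by_contra ht
  exact (hmax t (mem_filter.2 ⟨mem_univ t, ht⟩)).not_gt hmt

theorem sum_pow_mul_pos_of_top_pos {n : ℕ} {β k : ℝ} (hβ : 2 * k + 1 ≤ β) {d : Fin n → ℝ}
    (hdz : ∀ t, ∃ z : ℤ, d t = z) (hdk : ∀ t, |d t| ≤ k) {m : Fin n} (hm : 0 < d m)
    (htop : ∀ t, m < t → d t = 0) : 0 < ∑ t : Fin n, β ^ ((t : ℕ) + 1) * d t := by
  have hk : 0 ≤ k := (abs_nonneg _).trans (hdk m)
  have hβ0 : 0 < β := by linarith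
  have hm1 : 1 ≤ d m := by
    obtain ⟨z, hz⟩ := hdz m
    rw [hz] at hm ⊢
    exact_mod_cast (Int.cast_pos.1 hm : 0 < z)
  have hsplit : ∑ t : Fin n, β ^ ((t : ℕ) + 1) * d t
      = ∑ t ∈ Finset.Iio m, β ^ ((t : ℕ) + 1) * d t + β ^ ((m : ℕ) + 1) * d m := by
    rw [← sum_subset (subset_univ (Finset.Iic m)), ← Finset.Iio_insert,
      sum_insert Finset.notMem_Iio_self, add_comm]
    intro t _ ht
    rw [htop t (not_le.1 (by simpa using ht)), mul_zero]
  have hlow : -(k * ∑ s ∈ range m, β ^ (s + 1))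
      ≤ ∑ t ∈ Finset.Iio m, β ^ ((t : ℕ) + 1) * d t := by
    rw [← Nat.Iio_eq_range, ← Fin.map_valEmbedding_Iio, sum_map, mul_sum, ← sum_neg_distrib]
    simp only [Fin.valEmbedding_apply]
    refine sum_le_sum fun t _ => ?_
    have hpow : 0 ≤ β ^ ((t : ℕ) + 1) := pow_nonneg hβ0.le _
    nlinarith [abs_le.1 (hdk t)]
  have htopterm : β ^ ((m : ℕ) + 1) ≤ β ^ ((m : ℕ) + 1) * d m :=
    le_mul_of_one_le_right (pow_pos hβ0 _).le hm1
  linarith [mul_sum_range_pow_succ_le hk hβ m, pow_pos hβ0 ((m : ℕ) + 1)]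

end WeightedSums

section SignedPermutationOrder

variable {n : ℕ}

theorem dotp_signedPermVec (π : Equiv.Perm (Fin n)) (ε : Fin n → ℝ) (α : ℝ) (x : Fin n → ℝ) :
    dotp (signedPermVec π ε α) x
      = ∑ t : Fin n, α ^ ((t : ℕ) + 1) * (ε (π.symm t) * x (π.symm t)) := by
  rw [dotp, ← Equiv.sum_comp π.symm]
  refine sum_congr rfl fun t _ => ?_
  simp only [signedPermVec, Equiv.apply_symm_apply]
  ring

theorem signed_sub_isInt_and_abs_le {k : ℕ} {e a b : ℝ} (he : e = 1 ∨ e = -1)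
    (ha : (∃ z : ℤ, a = z) ∧ 0 ≤ a ∧ a ≤ k) (hb : (∃ z : ℤ, b = z) ∧ 0 ≤ b ∧ b ≤ k) :
    (∃ z : ℤ, e * a - e * b = z) ∧ |e * a - e * b| ≤ k := by
  obtain ⟨⟨za, rfl⟩, ha0, hak⟩ := ha
  obtain ⟨⟨zb, rfl⟩, hb0, hbk⟩ := hb
  rcases he with rfl | rfl
  · exact ⟨⟨za - zb, by push_cast; ring⟩, abs_le.2 ⟨by linarith, by linarith⟩⟩
  · exact ⟨⟨zb - za, by push_cast; ring⟩, abs_le.2 ⟨by linarith, by linarith⟩⟩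

theorem dotp_signedPermVec_lt_of_lex {k : ℕ} {π : Equiv.Perm (Fin n)} {ε : Fin n → ℝ}
    (hε : ∀ i, ε i = 1 ∨ ε i = -1) {α : ℝ} (hα : 2 * (k : ℝ) + 1 ≤ α) {u v : Fin n → ℝ}
    (hu : ∀ i, (∃ z : ℤ, u i = z) ∧ 0 ≤ u i ∧ u i ≤ k)
    (hv : ∀ i, (∃ z : ℤ, v i = z) ∧ 0 ≤ v i ∧ v i ≤ k) (huv : u ≠ v)
    (hlex : ∀ m : Fin n,
      (∀ t, m < t → ε (π.symm t) * u (π.symm t) = ε (π.symm t) * v (π.symm t)) →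
        ε (π.symm m) * u (π.symm m) ≤ ε (π.symm m) * v (π.symm m)) :
    dotp (signedPermVec π ε α) u < dotp (signedPermVec π ε α) v := by
  set d : Fin n → ℝ := fun t => ε (π.symm t) * v (π.symm t) - ε (π.symm t) * u (π.symm t)
  have hd : d ≠ 0 := by
    refine fun h => huv (funext fun j => ?_)
    have hj := congrFun h (π j)
    rcases hε j with hεj | hεj <;>
      simp only [d, Equiv.symm_apply_apply, hεj, Pi.zero_apply] at hj <;> linarith
  obtain ⟨m, hm, htop⟩ := exists_ne_zero_forall_gt_eq_zero hd
  have hdm : 0 < d m :=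
    (sub_nonneg.2 (hlex m fun t ht => (sub_eq_zero.1 (htop t ht)).symm)).lt_of_ne' hm
  have hdiff : dotp (signedPermVec π ε α) v - dotp (signedPermVec π ε α) u
      = ∑ t : Fin n, α ^ ((t : ℕ) + 1) * d t := by
    rw [dotp_signedPermVec, dotp_signedPermVec, ← sum_sub_distrib]
    simp only [d, mul_sub]
  have hlattice t := signed_sub_isInt_and_abs_le (hε (π.symm t)) (hv (π.symm t)) (hu (π.symm t))
  linarith [sum_pow_mul_pos_of_top_pos hα (fun t => (hlattice t).1) (fun t => (hlattice t).2)
    hdm htop]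

end SignedPermutationOrder

/-- **Corollary (flag of faces reaching the `x_σ`-maximal vertex).**
Let `P ⊆ ℝ^n` be a `(0,k)`-lattice polytope, `σ = (π, ε)` a signed permutation,
`α ≥ 2k+1`, and `x_σ` the associated vector. Define `G_n = P` and, for
`i = n, …, 1`, let `G_{i−1}` be the set of points of `G_i` maximizing
`ε(π⁻¹(i))·x_{π⁻¹(i)}` over `G_i`. Then `G_0` is a singleton `{v}`, where `v`
is the unique vertex of `P` maximizing `x_σᵀx` over `P`. -/
theorem flag_of_faces_singleton {n : ℕ} (k : ℕ) (P : Set (Fin n → ℝ))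
    (hP : IsLatticePolytope k P)
    (π : Equiv.Perm (Fin n)) (ε : Fin n → ℝ) (hε : ∀ i, ε i = 1 ∨ ε i = -1)
    (α : ℝ) (hα : 2 * (k : ℝ) + 1 ≤ α)
    (G : ℕ → Set (Fin n → ℝ))
    (hGtop : G n = P)
    (hGstep : ∀ i : Fin n, G (i : ℕ) =
      {x ∈ G ((i : ℕ) + 1) | ∀ y ∈ G ((i : ℕ) + 1),
        ε (π.symm i) * y (π.symm i) ≤ ε (π.symm i) * x (π.symm i)}) :
    ∃ v : Fin n → ℝ,
      G 0 = {v} ∧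
      IsVertexOf P v ∧
      (∀ x ∈ P, dotp (signedPermVec π ε α) x ≤ dotp (signedPermVec π ε α) v) ∧
      (∀ w : Fin n → ℝ, IsVertexOf P w →
        (∀ x ∈ P, dotp (signedPermVec π ε α) x ≤ dotp (signedPermVec π ε α) w) →
        w = v) := by
  obtain ⟨⟨S, hSne, hPS⟩, hlattice⟩ := hP
  have hPcomp : IsCompact P := hPS ▸ S.finite_toSet.isCompact_convexHull ℝ
  have hPne : P.Nonempty := hPS ▸ hSne.to_set.convexHull
  let ℓ : Fin n → StrongDual ℝ (Fin n → ℝ) :=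
    fun i => ε (π.symm i) • ContinuousLinearMap.proj (π.symm i)
  have hG : IsMaximizerChain (fun i => ℓ i) G := hGstep
  have hsep : ∀ x y, (∀ i, ℓ i x = ℓ i y) → x = y := fun x y h => funext fun j => by
    rcases hε j with hεj | hεj <;> simpa [ℓ, hεj] using h (π j)
  obtain ⟨v, hG0, hv⟩ :=
    exists_chain_zero_eq_singleton hG (hGtop ▸ hPcomp) (hGtop ▸ hPne) hsep
  rw [hGtop] at hv
  have hlt : ∀ w, IsVertexOf P w → w ≠ v →
      dotp (signedPermVec π ε α) w < dotp (signedPermVec π ε α) v := fun w hw hwv =>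
    dotp_signedPermVec_lt_of_lex hε hα (hlattice w hw) (hlattice v hv) hwv fun m =>
      apply_le_of_apply_eq_of_gt hG (hGtop ▸ extremePoints_subset hw) (hG0 ▸ mem_singleton v) m
  obtain ⟨w, hw, hwmax⟩ := exists_mem_extremePoints_forall_le hPcomp hPne
    (∑ j, signedPermVec π ε α j • ContinuousLinearMap.proj j)
  replace hwmax : ∀ x ∈ P, dotp (signedPermVec π ε α) x ≤ dotp (signedPermVec π ε α) w := by
    simpa [dotp] using hwmax
  have hwv : w = v := by_contra fun h => (hlt w hw h).not_ge (hwmax v (extremePoints_subset hv))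
  refine ⟨v, hG0, hv, hwv ▸ hwmax, fun u hu humax => by_contra fun h =>
    (hlt u hu h).not_ge (humax v (extremePoints_subset hv))⟩
end
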